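/- arXiv:2605.12133 — 6 statements merged into one kernel-verified Lean document; each statement's English description precedes it below -/
import Mathlib

section
/- Let S = {a_1,...,a_n} ⊆ F_q be distinct elements and v ∈ (F_q^*)^n, with 3 ≤ k ≤ n-2 ≤ q-2. The extended subcode of GRS code C_k(S,v,∞) = {(v_1 f(a_1),...,v_n f(a_n), f_k) : f ∈ V_k}, where V_k is the space of polynomials with coefficients supported on degrees {0,1,...,k-2,k} and f_k is the coefficient of x^k, has covering radius exactly n-k+1. -/
open Finset Polynomial

section Defs
variable {F : Type*} [Field F] [DecidableEq F]

noncomputable def minWt {n : ℕ} (C : Submodule F (Fin n → F)) : ℕ :=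
  sInf {w | ∃ c ∈ C, c ≠ 0 ∧ hammingNorm c = w}

noncomputable def distToCode {n : ℕ} (C : Submodule F (Fin n → F)) (u : Fin n → F) : ℕ :=
  sInf {d | ∃ c ∈ C, hammingDist u c = d}

noncomputable def covRad {n : ℕ} (C : Submodule F (Fin n → F)) : ℕ :=
  sSup {d | ∃ u : Fin n → F, distToCode C u = d}

def IsDeepHole {n : ℕ} (C : Submodule F (Fin n → F)) (u : Fin n → F) : Prop :=
  distToCode C u = covRad C

def dualCode {n : ℕ} (C : Submodule F (Fin n → F)) : Submodule F (Fin n → F) where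
  carrier := {x | ∀ c ∈ C, ∑ i, x i * c i = 0}
  zero_mem' := by intro c _; simp
  add_mem' := by
    intro a b ha hb c hc
    have h1 := ha c hc
    have h2 := hb c hc
    simp only [Pi.add_apply, add_mul, Finset.sum_add_distrib, h1, h2, add_zero]
  smul_mem' := by
    intro r x hx c hc
    have h := hx c hc
    simp only [Pi.smul_apply, smul_eq_mul, mul_assoc, ← Finset.mul_sum, h, mul_zero]

noncomputable def extMap {n : ℕ} (u : Fin n → F) :
    ((Fin n → F) × F) →ₗ[F] (Fin (n + 1) → F) where
  toFun p := Fin.snoc (p.1 + p.2 • u) p.2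
  map_add' p q := by
    funext i
    refine Fin.lastCases ?_ (fun j => ?_) i
    · simp [Fin.snoc_last]
    · simp only [Fin.snoc_castSucc, Prod.fst_add, Prod.snd_add, Pi.add_apply, Pi.smul_apply, smul_eq_mul, add_smul]
      ring
  map_smul' r p := by
    funext i
    refine Fin.lastCases ?_ (fun j => ?_) i
    · simp [Fin.snoc_last]
    · simp only [Fin.snoc_castSucc, Prod.smul_fst, Prod.smul_snd, Pi.add_apply,
        Pi.smul_apply, smul_eq_mul, RingHom.id_apply]
      ring

noncomputable def extCode {n : ℕ} (C : Submodule F (Fin n → F)) (u : Fin n → F) :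
    Submodule F (Fin (n + 1) → F) :=
  Submodule.map (extMap u) (C.prod ⊤)

end Defs
section Defs
variable {F : Type*} [Field F] [DecidableEq F]

def Vspace (F : Type*) [Field F] (k : ℕ) : Submodule F (Polynomial F) where
  carrier := {f | f.coeff (k - 1) = 0 ∧ ∀ j, k < j → f.coeff j = 0}
  zero_mem' := by simp
  add_mem' := by
    rintro f g ⟨hf1, hf2⟩ ⟨hg1, hg2⟩
    exact ⟨by simp [hf1, hg1], fun j hj => by simp [hf2 j hj, hg2 j hj]⟩
  smul_mem' := by
    rintro r f ⟨hf1, hf2⟩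
    exact ⟨by simp [hf1], fun j hj => by simp [hf2 j hj]⟩

noncomputable def esgrsMap {n : ℕ} (k : ℕ) (a v : Fin n → F) :
    Polynomial F →ₗ[F] (Fin (n + 1) → F) where
  toFun f := Fin.snoc (fun j => v j * f.eval (a j)) (f.coeff k)
  map_add' f g := by
    funext i
    refine Fin.lastCases ?_ (fun j => ?_) i
    · simp [Fin.snoc_last]
    · simp [Fin.snoc_castSucc, mul_add]
  map_smul' r f := by
    funext i
    refine Fin.lastCases ?_ (fun j => ?_) i
    · simp [Fin.snoc_last]
    · simp only [Fin.snoc_castSucc, Pi.smul_apply, smul_eq_mul, eval_smul,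
        RingHom.id_apply]
      ring

noncomputable def esgrs {n : ℕ} (k : ℕ) (a v : Fin n → F) :
    Submodule F (Fin (n + 1) → F) :=
  Submodule.map (esgrsMap k a v) (Vspace F k)

end Defs

section Aux2
set_option linter.unusedSectionVars false


variable {F : Type*} [Field F] [DecidableEq F]

lemma myRootCount {n d : ℕ} {a : Fin n → F} (ha : Function.Injective a)
    {g : F[X]} (hg : g ≠ 0) (hd : g.natDegree ≤ d) :
    (Finset.univ.filter fun j => g.eval (a j) = 0).card ≤ d := by
  classical
  have hsub : (Finset.univ.filter fun j => g.eval (a j) = 0).image a ⊆ g.roots.toFinset := by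
    intro x hx
    simp only [Finset.mem_image, Finset.mem_filter, Finset.mem_univ, true_and] at hx
    obtain ⟨j, hj, rfl⟩ := hx
    simp [Multiset.mem_toFinset, Polynomial.mem_roots', hg, Polynomial.IsRoot, hj]
  calc (Finset.univ.filter fun j => g.eval (a j) = 0).card
      = ((Finset.univ.filter fun j => g.eval (a j) = 0).image a).card :=
        (Finset.card_image_of_injective _ ha).symm
    _ ≤ g.roots.toFinset.card := Finset.card_le_card hsub
    _ ≤ Multiset.card g.roots := Multiset.toFinset_card_le _
    _ ≤ g.natDegree := Polynomial.card_roots' g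
    _ ≤ d := hd

lemma myDistLe {N : ℕ} {u c : Fin N → F} (T : Finset (Fin N))
    (h : ∀ i ∈ T, u i = c i) : hammingDist u c ≤ N - T.card := by
  have hsub : (Finset.univ.filter fun i => u i ≠ c i) ⊆ Tᶜ := by
    intro i hi
    rw [Finset.mem_compl]
    exact fun hiT => (Finset.mem_filter.1 hi).2 (h i hiT)
  calc hammingDist u c ≤ Tᶜ.card := Finset.card_le_card hsub
    _ = N - T.card := by rw [Finset.card_compl, Fintype.card_fin]

lemma myDistGe {N m : ℕ} {u c : Fin N → F}
    (h : (Finset.univ.filter fun i => u i = c i).card ≤ m) : N - m ≤ hammingDist u c := by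
  have key := Finset.card_filter_add_card_filter_not (s := (Finset.univ : Finset (Fin N)))
    (p := fun i => u i = c i)
  have : hammingDist u c = (Finset.univ.filter fun i => ¬ u i = c i).card := rfl
  rw [Finset.card_univ, Fintype.card_fin] at key
  omega

end Aux2

theorem stmt_6 {F : Type*} [Field F] [Fintype F] [DecidableEq F] {n k : ℕ}
    (hk : 3 ≤ k) (hkn : k + 2 ≤ n) (hn : n ≤ Fintype.card F)
    (a v : Fin n → F) (ha : Function.Injective a) (hv : ∀ j, v j ≠ 0) :
    covRad (esgrs k a v) = n - k + 1 := by
  classical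
  have hk1n : k - 1 ≤ n := by omega
  -- upper bound for every word
  have hub : ∀ u : Fin (n+1) → F, distToCode (esgrs k a v) u ≤ n - k + 1 := by
    intro u
    set c0 := u (Fin.last n) with hc0
    set s : Finset (Fin n) := Finset.univ.map (Fin.castLEEmb hk1n) with hs
    have hscard : s.card = k - 1 := by simp [hs]
    have hinj : Set.InjOn a s := fun x _ y _ h => ha h
    set r : Fin n → F := fun j => u (Fin.castSucc j) / v j - c0 * (a j)^k with hr
    set f : F[X] := Polynomial.C c0 * Polynomial.X^k + Lagrange.interpolate s a r with hf
    have hcoeffint : ∀ m : ℕ, k - 1 ≤ m → (Lagrange.interpolate s a r).coeff m = 0 := by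
      intro m hm
      apply Polynomial.coeff_eq_zero_of_degree_lt
      calc (Lagrange.interpolate s a r).degree < ((k-1 : ℕ) : WithBot ℕ) := by
            simpa [hscard] using Lagrange.degree_interpolate_lt r hinj
        _ ≤ (m : WithBot ℕ) := by exact_mod_cast Nat.cast_le.2 hm
    have hfV : f ∈ Vspace F k := by
      constructor
      · show f.coeff (k-1) = 0
        rw [hf, Polynomial.coeff_add, hcoeffint (k-1) le_rfl, Polynomial.coeff_C_mul,
          Polynomial.coeff_X_pow, if_neg (by omega : ¬ (k - 1 = k))]
        ring
      · intro j hj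
        show f.coeff j = 0
        rw [hf, Polynomial.coeff_add, hcoeffint j (by omega), Polynomial.coeff_C_mul,
          Polynomial.coeff_X_pow, if_neg (by omega : ¬ (j = k))]
        ring
    have hck : f.coeff k = c0 := by
      rw [hf, Polynomial.coeff_add, hcoeffint k (by omega), Polynomial.coeff_C_mul,
        Polynomial.coeff_X_pow, if_pos rfl]
      ring
    have hcmem : esgrsMap k a v f ∈ esgrs k a v := ⟨f, hfV, rfl⟩
    set T : Finset (Fin (n+1)) := s.image Fin.castSucc ∪ {Fin.last n} with hT
    have hTcard : T.card = k := by
      rw [hT, Finset.card_union_of_disjoint, Finset.card_image_of_injective _ (Fin.castSucc_injective n),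
        hscard, Finset.card_singleton]
      · omega
      · simp only [Finset.disjoint_singleton_right, Finset.mem_image]
        rintro ⟨j, -, hj⟩
        exact absurd hj (Fin.ne_of_lt (Fin.castSucc_lt_last j))
    have hagree : ∀ i ∈ T, u i = esgrsMap k a v f i := by
      intro i hi
      rw [hT, Finset.mem_union] at hi
      rcases hi with hi | hi
      · obtain ⟨j, hj, rfl⟩ := Finset.mem_image.1 hi
        have hmap : esgrsMap k a v f (Fin.castSucc j) = v j * f.eval (a j) := by
          simp [esgrsMap, Fin.snoc_castSucc]
        rw [hmap]
        have heval : f.eval (a j) = c0 * (a j)^k + r j := by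
          rw [hf, Polynomial.eval_add, Polynomial.eval_mul, Polynomial.eval_C,
            Polynomial.eval_pow, Polynomial.eval_X, Lagrange.eval_interpolate_at_node r hinj hj]
        rw [heval, hr]
        have hsimp : c0 * a j ^ k + (u (Fin.castSucc j) / v j - c0 * a j ^ k)
            = u (Fin.castSucc j) / v j := by ring
        rw [hsimp, mul_div_cancel₀ _ (hv j)]
      · rw [Finset.mem_singleton] at hi
        subst hi
        have hmap : esgrsMap k a v f (Fin.last n) = f.coeff k := by
          simp [esgrsMap, Fin.snoc_last]
        rw [hmap, hck]
    have hdle : hammingDist u (esgrsMap k a v f) ≤ n - k + 1 := by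
      have := myDistLe T hagree
      rw [hTcard] at this
      omega
    exact le_trans (Nat.sInf_le ⟨_, hcmem, rfl⟩) hdle
  -- the deep hole
  set u0 : Fin (n+1) → F := Fin.snoc (fun j => v j * (a j)^(k-1)) 0 with hu0
  have hlb : ∀ w ∈ esgrs k a v, n - k + 1 ≤ hammingDist u0 w := by
    rintro w ⟨f, ⟨hf1, hf2⟩, rfl⟩
    set g : F[X] := Polynomial.X^(k-1) - f with hg
    have hgc : ∀ m : ℕ, g.coeff m = (if m = k - 1 then 1 else 0) - f.coeff m := by
      intro m; simp [hg, Polynomial.coeff_X_pow]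
    have hg0 : g ≠ 0 := by
      intro h
      have := hgc (k-1)
      rw [h] at this
      simp [hf1] at this
    have hgeval : ∀ j : Fin n, g.eval (a j) = (a j)^(k-1) - f.eval (a j) := by
      intro j; simp [hg]
    -- agreement on evaluation coordinates forces a root of g
    have hroot : ∀ j : Fin n, u0 (Fin.castSucc j) = esgrsMap k a v f (Fin.castSucc j) →
        g.eval (a j) = 0 := by
      intro j hj
      rw [hu0] at hj
      have : v j * (a j)^(k-1) = v j * f.eval (a j) := by
        simpa [esgrsMap, Fin.snoc_castSucc] using hj
      have := mul_left_cancel₀ (hv j) this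
      rw [hgeval j, this, sub_self]
    have hsub0 : (Finset.univ.filter fun i : Fin (n+1) =>
        u0 i = esgrsMap k a v f i) ⊆
        ((Finset.univ.filter fun j : Fin n => g.eval (a j) = 0).image Fin.castSucc) ∪ {Fin.last n} := by
      intro i hi
      rw [Finset.mem_filter] at hi
      rcases Fin.eq_castSucc_or_eq_last i with ⟨j, rfl⟩ | rfl
      · exact Finset.mem_union_left _ (Finset.mem_image.2
          ⟨j, Finset.mem_filter.2 ⟨Finset.mem_univ j, hroot j hi.2⟩, rfl⟩)
      · exact Finset.mem_union_right _ (Finset.mem_singleton_self _)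
    have hcard : (Finset.univ.filter fun i : Fin (n+1) =>
        u0 i = esgrsMap k a v f i).card ≤ k := by
      by_cases hfk : f.coeff k = 0
      · -- degree of g at most k-1
        have hdeg : g.natDegree ≤ k - 1 := by
          apply Polynomial.natDegree_le_iff_coeff_eq_zero.2
          intro m hm
          rw [hgc m, if_neg (by omega : ¬ (m = k - 1))]
          by_cases hmk : m = k
          · subst hmk; rw [hfk]; ring
          · rw [hf2 m (by omega)]; ring
        calc _ ≤ _ := Finset.card_le_card hsub0
          _ ≤ ((Finset.univ.filter fun j : Fin n => g.eval (a j) = 0).image Fin.castSucc).card + 1 := by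
              apply le_trans (Finset.card_union_le _ _); simp
          _ ≤ (k - 1) + 1 := by
              gcongr
              rw [Finset.card_image_of_injective _ (Fin.castSucc_injective n)]
              exact myRootCount ha hg0 hdeg
          _ = k := by omega
      · -- last coordinate disagrees
        have hdeg : g.natDegree ≤ k := by
          apply Polynomial.natDegree_le_iff_coeff_eq_zero.2
          intro m hm
          rw [hgc m, hf2 m hm, if_neg (by omega : ¬ (m = k - 1))]
          ring
        have hsub1 : (Finset.univ.filter fun i : Fin (n+1) =>
            u0 i = esgrsMap k a v f i) ⊆
            ((Finset.univ.filter fun j : Fin n => g.eval (a j) = 0).image Fin.castSucc) := by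
          intro i hi
          have hi' := hsub0 hi
          rw [Finset.mem_union] at hi'
          rcases hi' with h | h
          · exact h
          · exfalso
            rw [Finset.mem_singleton] at h
            subst h
            rw [Finset.mem_filter] at hi
            have h2 : esgrsMap k a v f (Fin.last n) = f.coeff k := by
              simp [esgrsMap, Fin.snoc_last]
            have h1 : u0 (Fin.last n) = 0 := by simp [hu0, Fin.snoc_last]
            exact hfk (by rw [← h2, ← hi.2, h1])
        calc _ ≤ _ := Finset.card_le_card hsub1
          _ = (Finset.univ.filter fun j : Fin n => g.eval (a j) = 0).card :=
              Finset.card_image_of_injective _ (Fin.castSucc_injective n)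
          _ ≤ k := myRootCount ha hg0 hdeg
    have := myDistGe hcard
    omega
  have hd0 : distToCode (esgrs k a v) u0 = n - k + 1 := by
    refine le_antisymm (hub u0) ?_
    refine le_csInf ⟨hammingDist u0 0, 0, Submodule.zero_mem _, rfl⟩ ?_
    rintro d ⟨c, hc, rfl⟩
    exact hlb c hc
  have hbdd : BddAbove {d | ∃ u : Fin (n+1) → F, distToCode (esgrs k a v) u = d} := by
    refine ⟨n - k + 1, ?_⟩
    rintro d ⟨u, rfl⟩
    exact hub u
  refine le_antisymm ?_ ?_
  · refine csSup_le ⟨_, u0, rfl⟩ ?_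
    rintro d ⟨u, rfl⟩
    exact hub u
  · exact le_csSup hbdd ⟨u0, hd0⟩
end

section
/- Let 3 ≤ k ≤ n-2 ≤ q-2, S = {a_1,...,a_n} ⊆ F_q distinct, v ∈ (F_q^*)^n. The extended subcode of GRS code C_k(S,v,∞) is an [n+1, k, n-k+2] MDS code if and only if no k-element subset of S sums to zero (S is k-zero-sum free); and it is an [n+1, k, n-k+1] NMDS code if and only if some k-element subset of S sums to zero. -/
open Finset Polynomial

section Aux
variable {F : Type*} [Field F] [DecidableEq F]

def iotaV (k : ℕ) (i : Fin k) : ℕ := if (i:ℕ) < k - 1 then (i:ℕ) else k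

lemma iotaV_injective {k : ℕ} : Function.Injective (iotaV k) := by
  intro i j h
  have hi := i.isLt; have hj := j.isLt
  unfold iotaV at h
  split_ifs at h <;> (apply Fin.ext; omega)

lemma mem_range_iotaV {k m : ℕ} (hk : 1 ≤ k) : (∃ i : Fin k, iotaV k i = m) ↔ (m < k - 1 ∨ m = k) := by
  constructor
  · rintro ⟨i, rfl⟩
    unfold iotaV; split_ifs with h
    exacts [Or.inl h, Or.inr rfl]
  · rintro (h | h)
    · exact ⟨⟨m, by omega⟩, by simp only [iotaV]; rw [if_pos h]⟩
    · refine ⟨⟨k-1, by omega⟩, ?_⟩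
      simp only [iotaV]
      rw [if_neg (by omega), ← h]

lemma X_pow_iotaV_mem (k : ℕ) (hk : 3 ≤ k) (i : Fin k) : (X : F[X])^(iotaV k i) ∈ Vspace F k := by
  have hi := i.isLt
  constructor
  · rw [coeff_X_pow, if_neg]
    unfold iotaV; split_ifs <;> omega
  · intro j hj
    rw [coeff_X_pow, if_neg]
    unfold iotaV; split_ifs <;> omega

lemma Vspace_eq_span (k : ℕ) (hk : 3 ≤ k) :
    Vspace F k = Submodule.span F (Set.range fun i : Fin k => (X:F[X])^(iotaV k i)) := by
  apply le_antisymm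
  · intro f hf
    obtain ⟨h1, h2⟩ := hf
    have hrepr : f = ∑ i : Fin k, f.coeff (iotaV k i) • (X:F[X])^(iotaV k i) := by
      ext m
      rw [Polynomial.finset_sum_coeff]
      simp only [Polynomial.coeff_smul, Polynomial.coeff_X_pow, smul_eq_mul]
      by_cases hm : ∃ i : Fin k, iotaV k i = m
      · obtain ⟨i, rfl⟩ := hm
        rw [Finset.sum_eq_single i]
        · simp
        · intro j _ hji
          rw [if_neg (fun h => hji (iotaV_injective h.symm)), mul_zero]
        · intro h; exact absurd (Finset.mem_univ i) h
      · have hm' : ¬ (m < k - 1 ∨ m = k) := fun h => hm ((mem_range_iotaV (by omega)).mpr h)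
        push_neg at hm'
        have hf0 : f.coeff m = 0 := by
          rcases Nat.lt_or_ge m k with h | h
          · have : m = k - 1 := by omega
            rw [this]; exact h1
          · exact h2 m (by omega)
        rw [hf0, Finset.sum_eq_zero]
        intro j _
        rw [if_neg (fun h => hm ⟨j, h.symm⟩), mul_zero]
    rw [hrepr]
    exact Submodule.sum_mem _ fun i _ =>
      Submodule.smul_mem _ _ (Submodule.subset_span ⟨i, rfl⟩)
  · rw [Submodule.span_le]
    rintro _ ⟨i, rfl⟩
    exact X_pow_iotaV_mem k hk i

lemma linearIndependent_X_pow_iotaV (k : ℕ) :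
    LinearIndependent F (fun i : Fin k => (X:F[X])^(iotaV k i)) := by
  have h := (Polynomial.basisMonomials F).linearIndependent.comp (iotaV k) iotaV_injective
  have : (fun i : Fin k => (X:F[X])^(iotaV k i)) =
      (Polynomial.basisMonomials F : ℕ → F[X]) ∘ (iotaV k) := by
    funext i
    simp [Polynomial.coe_basisMonomials, Polynomial.X_pow_eq_monomial]
  rw [this]
  exact h

instance VspaceFD (k : ℕ) : FiniteDimensional F (Vspace F k) := by
  have hle : Vspace F k ≤ degreeLT F (k+1) := by
    intro f hf
    rw [mem_degreeLT]
    rw [Polynomial.degree_lt_iff_coeff_zero]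
    intro m hm
    exact hf.2 m (by exact_mod_cast Nat.lt_of_succ_le (by exact_mod_cast hm))
  haveI : FiniteDimensional F (degreeLT F (k+1)) :=
    (degreeLTEquiv F (k+1)).symm.finiteDimensional
  exact Submodule.finiteDimensional_of_le hle

lemma finrank_Vspace (k : ℕ) (hk : 3 ≤ k) : Module.finrank F (Vspace F k) = k := by
  rw [Vspace_eq_span k hk, finrank_span_eq_card (linearIndependent_X_pow_iotaV k)]
  simp

end Aux

section B
variable {F : Type*} [Field F] [DecidableEq F] {n k : ℕ} (a v : Fin n → F)

lemma esgrsMap_castSucc (f : F[X]) (j : Fin n) :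
    esgrsMap k a v f (Fin.castSucc j) = v j * f.eval (a j) := by
  simp [esgrsMap, Fin.snoc_castSucc]

lemma esgrsMap_last (f : F[X]) : esgrsMap k a v f (Fin.last n) = f.coeff k := by
  simp [esgrsMap]

variable {a v}

lemma natDegree_le_of_memV {f : F[X]} (hf : f ∈ Vspace F k) : f.natDegree ≤ k :=
  natDegree_le_iff_coeff_eq_zero.mpr fun _ h => hf.2 _ h

lemma natDegree_le_of_memV' (hk : 3 ≤ k) {f : F[X]} (hf : f ∈ Vspace F k)
    (h0 : f.coeff k = 0) : f.natDegree ≤ k - 2 := by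
  refine natDegree_le_iff_coeff_eq_zero.mpr fun m hm => ?_
  rcases Nat.lt_or_ge m k with h | h
  · have : m = k - 1 := by omega
    rw [this]; exact hf.1
  · rcases Nat.eq_or_lt_of_le h with rfl | h'
    · exact h0
    · exact hf.2 m h'

/-- index set of roots among the evaluation points -/
def Zf (a : Fin n → F) (f : F[X]) : Finset (Fin n) := {j | f.eval (a j) = 0}

lemma wt_formula (hv : ∀ j, v j ≠ 0) (f : F[X]) :
    hammingNorm (esgrsMap k a v f) =
      (n - (Zf a f).card) + (if f.coeff k = 0 then 0 else 1) := by
  classical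
  unfold hammingNorm
  rw [Finset.card_filter]
  rw [Fin.sum_univ_castSucc]
  have h1 : ∀ j : Fin n,
      (if esgrsMap k a v f (Fin.castSucc j) ≠ 0 then 1 else 0) =
      (if f.eval (a j) ≠ 0 then 1 else 0) := by
    intro j
    rw [esgrsMap_castSucc]
    by_cases h : f.eval (a j) = 0
    · simp [h]
    · simp [h, mul_ne_zero (hv j) h]
  rw [Finset.sum_congr rfl (fun j _ => h1 j), ← Finset.card_filter]
  have key : (Zf a f).card + ({j | f.eval (a j) ≠ 0} : Finset (Fin n)).card = n := by
    have := Finset.card_filter_add_card_filter_not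
      (s := (Finset.univ : Finset (Fin n))) (p := fun j => f.eval (a j) = 0)
    simpa [Zf, Finset.card_univ] using this
  have h2 : ({j | f.eval (a j) ≠ 0} : Finset (Fin n)).card = n - (Zf a f).card := by
    omega
  rw [h2, esgrsMap_last]
  by_cases h : f.coeff k = 0 <;> simp [h]

lemma card_Zf_le (ha : Function.Injective a) {f : F[X]} (hf : f ≠ 0) :
    (Zf a f).card ≤ f.natDegree := by
  classical
  calc (Zf a f).card = ((Zf a f).image a).card :=
        (Finset.card_image_of_injective _ ha).symm
    _ ≤ f.roots.toFinset.card := by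
        apply Finset.card_le_card
        intro x hx
        simp only [Finset.mem_image] at hx
        obtain ⟨j, hj, rfl⟩ := hx
        simp only [Multiset.mem_toFinset, mem_roots hf, IsRoot.def]
        simpa [Zf] using hj
    _ ≤ Multiset.card f.roots := Multiset.toFinset_card_le _
    _ ≤ f.natDegree := Polynomial.card_roots' f

-- product polynomial facts
lemma prodpoly_natDegree (t : Finset (Fin n)) :
    (∏ j ∈ t, (X - C (a j))).natDegree = t.card := by
  rw [natDegree_prod _ _ (fun j _ => X_sub_C_ne_zero (a j))]
  simp

lemma prodpoly_monic (t : Finset (Fin n)) : (∏ j ∈ t, (X - C (a j))).Monic :=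
  monic_prod_of_monic _ _ (fun j _ => monic_X_sub_C (a j))

lemma prodpoly_eval_eq_zero_iff (ha : Function.Injective a) (t : Finset (Fin n)) (j : Fin n) :
    (∏ i ∈ t, (X - C (a i))).eval (a j) = 0 ↔ j ∈ t := by
  rw [eval_prod, Finset.prod_eq_zero_iff]
  constructor
  · rintro ⟨i, hi, h⟩
    simp only [eval_sub, eval_X, eval_C, sub_eq_zero] at h
    rwa [← ha h] at hi
  · intro hj
    exact ⟨j, hj, by simp⟩

lemma prodpoly_Zf (ha : Function.Injective a) (t : Finset (Fin n)) :
    Zf a (∏ i ∈ t, (X - C (a i))) = t := by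
  ext j
  simp [Zf, prodpoly_eval_eq_zero_iff ha]

lemma prodpoly_memV (hk : 3 ≤ k) (t : Finset (Fin n)) (htc : t.card ≤ k - 2) :
    (∏ i ∈ t, (X - C (a i))) ∈ Vspace F k := by
  constructor
  · exact coeff_eq_zero_of_natDegree_lt (by rw [prodpoly_natDegree]; omega)
  · intro j hj
    exact coeff_eq_zero_of_natDegree_lt (by rw [prodpoly_natDegree]; omega)

lemma prodpoly_memV_of_sum (hk : 3 ≤ k) (t : Finset (Fin n)) (htc : t.card = k)
    (hs : ∑ j ∈ t, a j = 0) : (∏ i ∈ t, (X - C (a i))) ∈ Vspace F k := by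
  constructor
  · have := prod_X_sub_C_coeff_card_pred t a (by omega)
    rw [htc] at this
    rw [this, hs, neg_zero]
  · intro j hj
    exact coeff_eq_zero_of_natDegree_lt (by rw [prodpoly_natDegree]; omega)

end B

section C
variable {F : Type*} [Field F] [DecidableEq F] {n k : ℕ}
variable {a v : Fin n → F}

lemma esgrsMap_eq_zero (hkn : k + 2 ≤ n) (ha : Function.Injective a) (hv : ∀ j, v j ≠ 0)
    {f : F[X]} (hf : f ∈ Vspace F k) (h : esgrsMap k a v f = 0) : f = 0 := by
  have hev : ∀ j : Fin n, f.eval (a j) = 0 := by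
    intro j
    have h2 := congrFun h (Fin.castSucc j)
    rw [esgrsMap_castSucc] at h2
    simpa [hv j] using h2
  apply eq_zero_of_natDegree_lt_card_of_eval_eq_zero f ha hev
  rw [Fintype.card_fin]
  exact lt_of_le_of_lt (natDegree_le_of_memV hf) (by omega)

lemma finrank_esgrs (hk : 3 ≤ k) (hkn : k + 2 ≤ n) (ha : Function.Injective a)
    (hv : ∀ j, v j ≠ 0) : Module.finrank F (esgrs k a v) = k := by
  let g := (esgrsMap k a v).comp (Vspace F k).subtype
  have hinj : Function.Injective g := by
    rw [← LinearMap.ker_eq_bot, LinearMap.ker_eq_bot']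
    rintro ⟨f, hf⟩ hgf
    exact Subtype.ext (esgrsMap_eq_zero hkn ha hv hf hgf)
  have hr : LinearMap.range g = esgrs k a v := by
    rw [LinearMap.range_comp, Submodule.range_subtype]
    rfl
  rw [← hr, LinearMap.finrank_range_of_inj hinj, finrank_Vspace k hk]

lemma sum_Zf_eq_zero (hk : 3 ≤ k) (ha : Function.Injective a)
    {f : F[X]} (hf : f ∈ Vspace F k) (hck : f.coeff k ≠ 0)
    (hcard : k ≤ (Zf a f).card) : ∃ s : Finset (Fin n), s.card = k ∧ ∑ j ∈ s, a j = 0 := by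
  obtain ⟨s, hs_sub, hs_card⟩ := Finset.exists_subset_card_eq (s := Zf a f) (n := k) hcard
  refine ⟨s, hs_card, ?_⟩
  set g : F[X] := ∏ i ∈ s, (X - C (a i)) with hg
  have hgmon : g.Monic := prodpoly_monic s
  have hdeg : g.natDegree = k := by rw [hg, prodpoly_natDegree, hs_card]
  have hdiff : f - f.coeff k • g = 0 := by
    apply eq_zero_of_natDegree_lt_card_of_eval_eq_zero' _ (s.image a)
    · intro x hx
      obtain ⟨j, hj, rfl⟩ := Finset.mem_image.mp hx
      have hfj : f.eval (a j) = 0 := by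
        have := hs_sub hj
        simpa [Zf] using this
      have hgj : g.eval (a j) = 0 := by
        rw [hg, eval_prod]
        exact Finset.prod_eq_zero hj (by simp)
      simp [hfj, hgj]
    · rw [Finset.card_image_of_injective _ ha, hs_card]
      have hle : (f - f.coeff k • g).natDegree ≤ k - 1 := by
        refine natDegree_le_iff_coeff_eq_zero.mpr fun m hm => ?_
        rcases Nat.eq_or_lt_of_le (Nat.succ_le_of_lt (by omega : k - 1 < m)) with h | h
        · have hmk : m = k := by omega
          subst hmk
          simp [coeff_smul, hdeg ▸ hgmon.coeff_natDegree]
        · have hmk : k < m := by omega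
          rw [coeff_sub, hf.2 m hmk, coeff_smul,
            coeff_eq_zero_of_natDegree_lt (by omega : g.natDegree < m)]
          simp
      omega
  have hco := congrArg (fun p => Polynomial.coeff p (k-1)) hdiff
  simp only [coeff_sub, coeff_smul, coeff_zero, smul_eq_mul] at hco
  rw [hf.1] at hco
  have hgco : g.coeff (k - 1) = - ∑ j ∈ s, a j := by
    have := prod_X_sub_C_coeff_card_pred s a (by omega)
    rwa [hs_card] at this
  rw [hgco] at hco
  rw [zero_sub, neg_eq_zero] at hco
  rcases mul_eq_zero.mp hco with h | h
  · exact absurd h hck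
  · simpa using h

lemma minWt_eq_of {n' : ℕ} (C : Submodule F (Fin n' → F)) (d : ℕ)
    (hmem : ∃ c ∈ C, c ≠ 0 ∧ hammingNorm c = d)
    (hlb : ∀ c ∈ C, c ≠ 0 → d ≤ hammingNorm c) : minWt C = d := by
  apply le_antisymm
  · exact Nat.sInf_le hmem
  · apply le_csInf ⟨d, hmem⟩
    rintro w ⟨c, hc, hc0, rfl⟩
    exact hlb c hc hc0

lemma minWt_esgrs_of_zsf (hk : 3 ≤ k) (hkn : k + 2 ≤ n) (ha : Function.Injective a)
    (hv : ∀ j, v j ≠ 0)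
    (hzsf : ∀ s : Finset (Fin n), s.card = k → ∑ j ∈ s, a j ≠ 0) :
    minWt (esgrs k a v) = n - k + 2 := by
  apply minWt_eq_of
  · obtain ⟨t, _, htc⟩ := Finset.exists_subset_card_eq (s := (Finset.univ : Finset (Fin n))) (n := k-2)
      (by simp; omega)
    set f : F[X] := ∏ i ∈ t, (X - C (a i)) with hfdef
    have hfV := prodpoly_memV (a := a) hk t (le_of_eq htc)
    have hck : f.coeff k = 0 :=
      coeff_eq_zero_of_natDegree_lt (by rw [hfdef, prodpoly_natDegree]; omega)
    have hwt : hammingNorm (esgrsMap k a v f) = n - k + 2 := by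
      rw [wt_formula hv, prodpoly_Zf ha, htc, if_pos hck]
      omega
    refine ⟨_, Submodule.mem_map_of_mem hfV, ?_, hwt⟩
    intro h0
    rw [h0] at hwt
    simp at hwt
  · rintro c hc hc0
    obtain ⟨f, hfV, rfl⟩ := hc
    have hf0 : f ≠ 0 := fun h => hc0 (by rw [h]; exact map_zero _)
    rw [wt_formula hv]
    have hz := card_Zf_le ha hf0
    by_cases h : f.coeff k = 0
    · have := natDegree_le_of_memV' hk hfV h
      simp only [if_pos h]
      omega
    · have hd := natDegree_le_of_memV hfV
      have hzlt : (Zf a f).card ≤ k - 1 := by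
        by_contra hcon
        push_neg at hcon
        obtain ⟨s, hsc, hss⟩ := sum_Zf_eq_zero hk ha hfV h (by omega)
        exact hzsf s hsc hss
      simp only [if_neg h]
      omega

lemma minWt_esgrs_of_not_zsf (hk : 3 ≤ k) (hkn : k + 2 ≤ n) (ha : Function.Injective a)
    (hv : ∀ j, v j ≠ 0)
    (hzs : ¬ ∀ s : Finset (Fin n), s.card = k → ∑ j ∈ s, a j ≠ 0) :
    minWt (esgrs k a v) = n - k + 1 := by
  push_neg at hzs
  obtain ⟨s, hsc, hss⟩ := hzs
  apply minWt_eq_of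
  · set f : F[X] := ∏ i ∈ s, (X - C (a i)) with hfdef
    have hfV := prodpoly_memV_of_sum hk s hsc hss
    have hck : f.coeff k = 1 := by
      have := (prodpoly_monic (a := a) s).coeff_natDegree
      rwa [prodpoly_natDegree, hsc] at this
    have hwt : hammingNorm (esgrsMap k a v f) = n - k + 1 := by
      rw [wt_formula hv, prodpoly_Zf ha, hsc, if_neg (by rw [hck]; exact one_ne_zero)]
    refine ⟨_, Submodule.mem_map_of_mem hfV, ?_, hwt⟩
    intro h0
    rw [h0] at hwt
    simp at hwt
  · rintro c hc hc0
    obtain ⟨f, hfV, rfl⟩ := hc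
    have hf0 : f ≠ 0 := fun h => hc0 (by rw [h]; exact map_zero _)
    rw [wt_formula hv]
    have hz := card_Zf_le ha hf0
    by_cases h : f.coeff k = 0
    · have := natDegree_le_of_memV' hk hfV h
      simp only [if_pos h]
      omega
    · have hd := natDegree_le_of_memV hfV
      simp only [if_neg h]
      omega

end C

section D
variable {F : Type*} [Field F] [DecidableEq F] {n k : ℕ}
variable {a v : Fin n → F}

lemma mem_dualCode {n' : ℕ} (C : Submodule F (Fin n' → F)) (x : Fin n' → F) :
    x ∈ dualCode C ↔ ∀ c ∈ C, ∑ i, x i * c i = 0 := Iff.rfl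

lemma hammingNorm_def {n' : ℕ} (x : Fin n' → F) :
    hammingNorm x = ({i | x i ≠ 0} : Finset (Fin n')).card := rfl

lemma dual_lb (hk : 3 ≤ k) (hkn : k + 2 ≤ n) (ha : Function.Injective a)
    (hv : ∀ j, v j ≠ 0) (x : Fin (n+1) → F) (hx : x ∈ dualCode (esgrs k a v))
    (hx0 : x ≠ 0) : k ≤ hammingNorm x := by
  by_contra hcon
  push_neg at hcon
  by_cases hfirst : ∃ j0 : Fin n, x (Fin.castSucc j0) ≠ 0
  · obtain ⟨j0, hj0⟩ := hfirst
    set T : Finset (Fin n) := {j | x (Fin.castSucc j) ≠ 0 ∧ j ≠ j0} with hT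
    have hj0T : j0 ∉ T := by simp [hT]
    have hTsub : (insert j0 T).image Fin.castSucc ⊆ ({i | x i ≠ 0} : Finset (Fin (n+1))) := by
      intro i hi
      obtain ⟨j, hj, rfl⟩ := Finset.mem_image.mp hi
      simp only [Finset.mem_insert] at hj
      simp only [Finset.mem_filter, Finset.mem_univ, true_and]
      rcases hj with rfl | hj
      · exact hj0
      · exact (by simpa [hT] using hj : x (Fin.castSucc j) ≠ 0 ∧ j ≠ j0).1
    have hTcard : T.card + 1 ≤ hammingNorm x := by
      have h1 : (insert j0 T).card ≤ hammingNorm x := by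
        rw [hammingNorm_def]
        calc (insert j0 T).card = ((insert j0 T).image Fin.castSucc).card :=
              (Finset.card_image_of_injective _ (Fin.castSucc_injective n)).symm
          _ ≤ _ := Finset.card_le_card hTsub
      rwa [Finset.card_insert_of_notMem hj0T] at h1
    set f : F[X] := ∏ i ∈ T, (X - C (a i)) with hf
    have hfV : f ∈ Vspace F k := prodpoly_memV hk T (by omega)
    have hck : f.coeff k = 0 :=
      coeff_eq_zero_of_natDegree_lt (by rw [hf, prodpoly_natDegree]; omega)
    have hsum := hx _ (Submodule.mem_map_of_mem hfV)
    rw [Fin.sum_univ_castSucc, esgrsMap_last, hck, mul_zero, add_zero] at hsum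
    rw [Finset.sum_eq_single j0 (fun j _ hne => ?_) (fun h => absurd (Finset.mem_univ j0) h)]
      at hsum
    · rw [esgrsMap_castSucc] at hsum
      have hev : f.eval (a j0) ≠ 0 := by
        rw [hf]
        intro h
        exact hj0T ((prodpoly_eval_eq_zero_iff ha T j0).mp h)
      exact (mul_ne_zero hj0 (mul_ne_zero (hv j0) hev)) hsum
    · by_cases hxj : x (Fin.castSucc j) = 0
      · rw [hxj, zero_mul]
      · have hjT : j ∈ T := by simp [hT, hxj, hne]
        rw [esgrsMap_castSucc, (prodpoly_eval_eq_zero_iff ha T j).mpr hjT, mul_zero, mul_zero]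
  · push_neg at hfirst
    have hlast : x (Fin.last n) ≠ 0 := by
      intro h
      apply hx0
      funext i
      refine Fin.lastCases ?_ (fun j => ?_) i
      · exact h
      · exact hfirst j
    have hfV : (X : F[X])^k ∈ Vspace F k := by
      constructor
      · rw [coeff_X_pow, if_neg (by omega)]
      · intro j hj
        rw [coeff_X_pow, if_neg (by omega)]
    have hsum := hx _ (Submodule.mem_map_of_mem hfV)
    rw [Fin.sum_univ_castSucc, esgrsMap_last, coeff_X_pow, if_pos rfl, mul_one] at hsum
    rw [Finset.sum_eq_zero (fun j _ => by rw [hfirst j, zero_mul]), zero_add] at hsum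
    exact hlast hsum

lemma dual_minWt (hk : 3 ≤ k) (hkn : k + 2 ≤ n) (ha : Function.Injective a)
    (hv : ∀ j, v j ≠ 0) {s : Finset (Fin n)} (hsc : s.card = k) (hss : ∑ j ∈ s, a j = 0) :
    minWt (dualCode (esgrs k a v)) = k := by
  classical
  -- the evaluation map on Vspace restricted to s
  set E : ↥(Vspace F k) →ₗ[F] (↥s → F) :=
    (LinearMap.pi fun j : ↥s => Polynomial.leval (a (j : Fin n))).comp
      (Vspace F k).subtype with hE
  have hnotinj : ¬ Function.Injective E := by
    intro hinj
    have hg : (∏ i ∈ s, (X - C (a i))) ∈ Vspace F k := prodpoly_memV_of_sum hk s hsc hss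
    have h0 : E ⟨_, hg⟩ = 0 := by
      funext j
      have : (∏ i ∈ s, (X - C (a i))).eval (a (j : Fin n)) = 0 :=
        (prodpoly_eval_eq_zero_iff ha s (j : Fin n)).mpr j.2
      simpa [hE, Polynomial.leval] using this
    have h1 : (⟨_, hg⟩ : ↥(Vspace F k)) = 0 := hinj (by rw [h0, map_zero])
    exact (prodpoly_monic s).ne_zero (congrArg Subtype.val h1)
  have hfr : Module.finrank F ↥(Vspace F k) = Module.finrank F (↥s → F) := by
    rw [finrank_Vspace k hk, Module.finrank_pi, Fintype.card_coe, hsc]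
  have hnots : ¬ Function.Surjective E := fun hsurj =>
    hnotinj ((LinearMap.injective_iff_surjective_of_finrank_eq_finrank hfr).mpr hsurj)
  have hlt : LinearMap.range E < ⊤ := lt_top_iff_ne_top.mpr
    (fun h => hnots (LinearMap.range_eq_top.mp h))
  obtain ⟨φ, hφne, hφbot⟩ :=
    Submodule.exists_dual_map_eq_bot_of_lt_top hlt inferInstance
  have hφ0 : ∀ w ∈ LinearMap.range E, φ w = 0 := by
    intro w hw
    have : φ w ∈ (LinearMap.range E).map φ := Submodule.mem_map_of_mem hw
    rw [hφbot] at this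
    exact (Submodule.mem_bot F).mp this
  set μ : ↥s → F := fun j => φ (fun j' => if j = j' then 1 else 0) with hμ
  have hφeq : ∀ w : ↥s → F, φ w = ∑ j, w j * μ j := by
    intro w
    conv_lhs => rw [pi_eq_sum_univ w, map_sum]
    refine Finset.sum_congr rfl fun j _ => ?_
    rw [map_smul, smul_eq_mul, hμ]
  have hμ0 : ∃ j, μ j ≠ 0 := by
    by_contra h
    push_neg at h
    apply hφne
    apply LinearMap.ext
    intro w
    rw [hφeq w]
    simp [h]
  obtain ⟨j0, hj0⟩ := hμ0
  set y : Fin n → F := fun j => (if h : j ∈ s then μ ⟨j, h⟩ else 0) * (v j)⁻¹ with hy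
  set x : Fin (n+1) → F := Fin.snoc y 0 with hxdef
  have hxd : x ∈ dualCode (esgrs k a v) := by
    rintro c ⟨f, hfV, rfl⟩
    rw [Fin.sum_univ_castSucc]
    have hlast : x (Fin.last n) = 0 := by rw [hxdef]; simp
    rw [hlast, zero_mul, add_zero]
    have hstep : ∀ j : Fin n, x (Fin.castSucc j) * esgrsMap k a v f (Fin.castSucc j) =
        (if h : j ∈ s then μ ⟨j, h⟩ * f.eval (a j) else 0) := by
      intro j
      simp only [hxdef, Fin.snoc_castSucc, hy]
      rw [esgrsMap_castSucc]
      by_cases h : j ∈ s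
      · rw [dif_pos h, dif_pos h]
        field_simp [hv j]
      · rw [dif_neg h, dif_neg h, zero_mul, zero_mul]
    rw [Finset.sum_congr rfl (fun j _ => hstep j)]
    rw [← Finset.sum_subset (Finset.subset_univ s) (fun j _ hj => by rw [dif_neg hj])]
    rw [← Finset.sum_attach s (fun j => if h : j ∈ s then μ ⟨j, h⟩ * f.eval (a j) else 0)]
    have hterm : ∀ j : ↥s,
        (if h : (j : Fin n) ∈ s then μ ⟨(j : Fin n), h⟩ * f.eval (a (j : Fin n)) else 0)
        = (E ⟨f, hfV⟩) j * μ j := by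
      intro j
      rw [dif_pos j.2, Subtype.coe_eta, mul_comm]
      congr 1
    rw [Finset.sum_congr rfl (fun j _ => hterm j), ← Finset.univ_eq_attach,
      ← hφeq (E ⟨f, hfV⟩)]
    exact hφ0 _ (LinearMap.mem_range_self E _)
  have hx0 : x ≠ 0 := by
    intro h
    apply hj0
    have h2 : x (Fin.castSucc (j0 : Fin n)) = 0 := by rw [h]; rfl
    simp only [hxdef, Fin.snoc_castSucc, hy] at h2
    rw [dif_pos j0.2, Subtype.coe_eta] at h2
    rcases mul_eq_zero.mp h2 with h3 | h3
    · exact h3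
    · exact absurd h3 (inv_ne_zero (hv _))
  have hnorm_le : hammingNorm x ≤ k := by
    rw [hammingNorm_def]
    have hsub0 : ∀ i : Fin (n+1), x i ≠ 0 → i ∈ s.image Fin.castSucc := by
      refine Fin.lastCases (motive := fun i => x i ≠ 0 → i ∈ s.image Fin.castSucc) ?_
        (fun j hxi => ?_)
      · intro hxi
        exact absurd (by rw [hxdef]; simp) hxi
      · by_cases hjs : j ∈ s
        · exact Finset.mem_image.mpr ⟨j, hjs, rfl⟩
        · refine absurd ?_ hxi
          simp only [hxdef, Fin.snoc_castSucc, hy]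
          rw [dif_neg hjs, zero_mul]
    have hsub : ({i | x i ≠ 0} : Finset (Fin (n+1))) ⊆ s.image Fin.castSucc := by
      intro i hi
      exact hsub0 i (by simpa using hi)
    calc ({i | x i ≠ 0} : Finset (Fin (n+1))).card ≤ (s.image Fin.castSucc).card :=
          Finset.card_le_card hsub
      _ ≤ s.card := Finset.card_image_le
      _ = k := hsc
  apply minWt_eq_of
  · exact ⟨x, hxd, hx0, le_antisymm hnorm_le (dual_lb hk hkn ha hv x hxd hx0)⟩
  · intro c hc hc0
    exact dual_lb hk hkn ha hv c hc hc0

end D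


theorem stmt_9 {F : Type*} [Field F] [Fintype F] [DecidableEq F] {n k : ℕ}
    (hk : 3 ≤ k) (hkn : k + 2 ≤ n) (hn : n ≤ Fintype.card F)
    (a v : Fin n → F) (ha : Function.Injective a) (hv : ∀ j, v j ≠ 0) :
    ((Module.finrank F ↥(esgrs k a v) = k ∧ minWt (esgrs k a v) = n - k + 2) ↔
      (∀ s : Finset (Fin n), s.card = k → ∑ j ∈ s, a j ≠ 0)) ∧
    ((Module.finrank F ↥(esgrs k a v) = k ∧ minWt (esgrs k a v) = n - k + 1 ∧
        minWt (dualCode (esgrs k a v)) = k) ↔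
      ¬ (∀ s : Finset (Fin n), s.card = k → ∑ j ∈ s, a j ≠ 0)) := by
  have hrank := finrank_esgrs hk hkn ha hv
  by_cases P : ∀ s : Finset (Fin n), s.card = k → ∑ j ∈ s, a j ≠ 0
  · have hmw := minWt_esgrs_of_zsf hk hkn ha hv P
    refine ⟨⟨fun _ => P, fun _ => ⟨hrank, hmw⟩⟩, ?_, fun h => absurd P h⟩
    rintro ⟨-, hmw', -⟩
    rw [hmw] at hmw'
    omega
  · have hmw := minWt_esgrs_of_not_zsf hk hkn ha hv P
    have hdual : minWt (dualCode (esgrs k a v)) = k := by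
      have P' := P
      push_neg at P'
      obtain ⟨s, hsc, hss⟩ := P'
      exact dual_minWt hk hkn ha hv hsc hss
    refine ⟨⟨?_, fun hP => absurd hP P⟩, fun _ => P, fun _ => ⟨hrank, hmw, hdual⟩⟩
    rintro ⟨-, hmw'⟩
    rw [hmw] at hmw'
    omega
end

section
/- Fix 3 ≤ k ≤ n-2 ≤ q-2, S = {a_1,...,a_n} ⊆ F_q distinct, v ∈ (F_q^*)^n. Let g(x) = g_{k-1} x^{k-1} + f(x) with g_{k-1} ∈ F_q^* and f ∈ V_k, let f_k be the coefficient of x^k in f, and set w = (v_1 g(a_1),...,v_n g(a_n), u_{n+1} v_{n+1}). Suppose u_{n+1} v_{n+1} ≠ f_k. Then w is a deep hole of C_k(S,v,∞) if and only if S is an (n, k, δ)-set for δ = g_{k-1}(u_{n+1} v_{n+1} - f_k)^{-1}, i.e., no k-element subset of S sums to δ. -/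
open Finset Polynomial

set_option linter.unusedSectionVars false
section AuxDeepHole
variable {F : Type*} [Field F] [DecidableEq F]

lemma DH.distToCode_le {n : ℕ} {C : Submodule F (Fin n → F)} {u c : Fin n → F}
    (hc : c ∈ C) : distToCode C u ≤ hammingDist u c :=
  Nat.sInf_le ⟨c, hc, rfl⟩

lemma DH.le_distToCode {n : ℕ} {C : Submodule F (Fin n → F)} {u : Fin n → F} {d : ℕ}
    (h : ∀ c ∈ C, d ≤ hammingDist u c) : d ≤ distToCode C u :=
  le_csInf ⟨hammingDist u 0, 0, C.zero_mem, rfl⟩ (by rintro x ⟨c, hc, rfl⟩; exact h c hc)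

lemma DH.distToCode_attained {n : ℕ} (C : Submodule F (Fin n → F)) (u : Fin n → F) :
    ∃ c ∈ C, hammingDist u c = distToCode C u :=
  Nat.sInf_mem (s := {d | ∃ c ∈ C, hammingDist u c = d})
    ⟨hammingDist u 0, 0, C.zero_mem, rfl⟩

lemma DH.covRad_le {n : ℕ} {C : Submodule F (Fin n → F)} {m : ℕ}
    (h : ∀ u, distToCode C u ≤ m) : covRad C ≤ m :=
  csSup_le ⟨distToCode C 0, 0, rfl⟩ (by rintro x ⟨u, rfl⟩; exact h u)

lemma DH.le_covRad {n : ℕ} {C : Submodule F (Fin n → F)} (u : Fin n → F) :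
    distToCode C u ≤ covRad C := by
  apply le_csSup
  · refine ⟨n, ?_⟩
    rintro x ⟨w, rfl⟩
    calc distToCode C w ≤ hammingDist w 0 := DH.distToCode_le C.zero_mem
      _ ≤ Fintype.card (Fin n) := hammingDist_le_card_fintype
      _ = n := Fintype.card_fin n
  · exact ⟨u, rfl⟩

omit [Field F] in
lemma DH.hammingDist_eq_sum {m : ℕ} (u w : Fin m → F) :
    hammingDist u w = ∑ i, if u i = w i then 0 else 1 := by
  rw [show hammingDist u w = (Finset.univ.filter fun i => u i ≠ w i).card from rfl,
    Finset.card_filter]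
  congr 1; ext i; by_cases h : u i = w i <;> simp [h]

omit [Field F] in
lemma DH.hammingDist_snoc {n : ℕ} (x y : Fin n → F) (s t : F) :
    hammingDist (Fin.snoc x s : Fin (n+1) → F) (Fin.snoc y t) =
      hammingDist x y + if s = t then 0 else 1 := by
  rw [DH.hammingDist_eq_sum, DH.hammingDist_eq_sum, Fin.sum_univ_castSucc]
  simp [Fin.snoc_castSucc, Fin.snoc_last]

lemma DH.vanish_card_le {n m : ℕ} {a : Fin n → F} (ha : Function.Injective a)
    {p : F[X]} (hp : p ≠ 0) (hd : p.natDegree ≤ m) :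
    (Finset.univ.filter fun j => p.eval (a j) = 0).card ≤ m := by
  classical
  have hsub : (Finset.univ.filter fun j => p.eval (a j) = 0).image a ⊆ p.roots.toFinset := by
    intro x hx
    simp only [Finset.mem_image, Finset.mem_filter] at hx
    obtain ⟨j, ⟨-, hj⟩, rfl⟩ := hx
    simp [Multiset.mem_toFinset, mem_roots, hp, IsRoot.def, hj]
  calc (Finset.univ.filter fun j => p.eval (a j) = 0).card
      = ((Finset.univ.filter fun j => p.eval (a j) = 0).image a).card :=
        (Finset.card_image_of_injective _ ha).symm
    _ ≤ p.roots.toFinset.card := Finset.card_le_card hsub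
    _ ≤ Multiset.card p.roots := p.roots.toFinset_card_le
    _ ≤ p.natDegree := p.card_roots'
    _ ≤ m := hd

lemma DH.nonvanish_card {n : ℕ} (a : Fin n → F) (p : F[X]) :
    (Finset.univ.filter fun j => p.eval (a j) ≠ 0).card =
      n - (Finset.univ.filter fun j => p.eval (a j) = 0).card := by
  rw [Finset.filter_not, Finset.card_sdiff_of_subset (Finset.filter_subset _ _), Finset.card_univ,
    Fintype.card_fin]

lemma DH.le_nonvanish {n m : ℕ} {a : Fin n → F} (ha : Function.Injective a)
    {p : F[X]} (hp : p ≠ 0) (hd : p.natDegree ≤ m) :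
    n - m ≤ (Finset.univ.filter fun j => p.eval (a j) ≠ 0).card := by
  rw [DH.nonvanish_card]
  exact Nat.sub_le_sub_left (DH.vanish_card_le ha hp hd) n

lemma DH.esgrsMap_apply {n k : ℕ} (a v : Fin n → F) (h : F[X]) :
    esgrsMap k a v h = Fin.snoc (fun j => v j * h.eval (a j)) (h.coeff k) := rfl

lemma DH.dist_formula {n k : ℕ} (a v : Fin n → F) (hv : ∀ j, v j ≠ 0)
    (g h : F[X]) (s : F) :
    hammingDist (Fin.snoc (fun j => v j * g.eval (a j)) s : Fin (n+1) → F)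
      (esgrsMap k a v h) =
      (Finset.univ.filter fun j => (g - h).eval (a j) ≠ 0).card +
        if s = h.coeff k then 0 else 1 := by
  rw [DH.esgrsMap_apply, DH.hammingDist_snoc]
  congr 1
  rw [show hammingDist (fun j => v j * g.eval (a j)) (fun j => v j * h.eval (a j)) =
      (Finset.univ.filter fun j =>
        v j * g.eval (a j) ≠ v j * h.eval (a j)).card from rfl]
  congr 1
  ext j
  simp only [Finset.mem_filter, Finset.mem_univ, true_and, eval_sub, sub_ne_zero]
  rw [not_iff_not]
  exact mul_right_inj' (hv j)

lemma DH.natDegree_prodXsubC {n : ℕ} (a : Fin n → F) (T : Finset (Fin n)) :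
    (∏ j ∈ T, (X - C (a j))).natDegree = T.card := by
  rw [Polynomial.natDegree_prod _ _ (fun j _ => X_sub_C_ne_zero (a j))]
  simp [natDegree_X_sub_C]

lemma DH.monic_prodXsubC {n : ℕ} (a : Fin n → F) (T : Finset (Fin n)) :
    (∏ j ∈ T, (X - C (a j))).Monic :=
  monic_prod_of_monic _ _ fun j _ => monic_X_sub_C (a j)

lemma DH.coeff_prodXsubC {n k : ℕ} (hk : 0 < k) (a : Fin n → F) (T : Finset (Fin n))
    (hT : T.card = k) :
    (∏ j ∈ T, (X - C (a j))).coeff (k - 1) = -∑ j ∈ T, a j := by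
  have h1 := prod_X_sub_C_nextCoeff (s := T) a
  rwa [nextCoeff_of_natDegree_pos (by rw [DH.natDegree_prodXsubC, hT]; exact hk),
    DH.natDegree_prodXsubC, hT] at h1

end AuxDeepHole

theorem stmt_12 {F : Type*} [Field F] [Fintype F] [DecidableEq F] {n k : ℕ}
    (hk : 3 ≤ k) (hkn : k + 2 ≤ n) (hn : n ≤ Fintype.card F)
    (a v : Fin n → F) (ha : Function.Injective a) (hv : ∀ j, v j ≠ 0)
    (gkm1 : F) (hg : gkm1 ≠ 0) (f : Polynomial F) (hf : f ∈ Vspace F k)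
    (ulast vlast : F) (huv : ulast * vlast ≠ f.coeff k) :
    IsDeepHole (esgrs k a v)
      (Fin.snoc
        (fun j => v j * (Polynomial.C gkm1 * Polynomial.X ^ (k - 1) + f).eval (a j))
        (ulast * vlast)) ↔
      ∀ s : Finset (Fin n), s.card = k →
        ∑ j ∈ s, a j ≠ gkm1 * (ulast * vlast - f.coeff k)⁻¹ := by
  classical
  obtain ⟨hf1, hf2⟩ := hf
  set δ : F := gkm1 * (ulast * vlast - f.coeff k)⁻¹ with hδ
  set G : F[X] := Polynomial.C gkm1 * Polynomial.X ^ (k - 1) + f with hG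
  set w : Fin (n+1) → F :=
    Fin.snoc (fun j => v j * G.eval (a j)) (ulast * vlast) with hw
  have huv' : ulast * vlast - f.coeff k ≠ 0 := sub_ne_zero.mpr huv
  have hmem : ∀ h ∈ Vspace F k, h.coeff (k-1) = 0 ∧ ∀ N, k < N → h.coeff N = 0 :=
    fun h hh => hh
  have hGc : ∀ N, (Polynomial.C gkm1 * Polynomial.X ^ (k-1)).coeff N =
      if N = k - 1 then gkm1 else 0 := by
    intro N; simp [Polynomial.coeff_C_mul, Polynomial.coeff_X_pow]
  have hGk1 : G.coeff (k-1) = gkm1 := by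
    rw [hG, Polynomial.coeff_add, hGc, hf1]; simp
  have hGk : G.coeff k = f.coeff k := by
    rw [hG, Polynomial.coeff_add, hGc, if_neg (by omega)]; simp
  have hGhi : ∀ N, k < N → G.coeff N = 0 := by
    intro N hN
    rw [hG, Polynomial.coeff_add, hGc, if_neg (by omega), hf2 N hN]; simp
  have hp_coeff : ∀ h ∈ Vspace F k, (G - h).coeff (k-1) = gkm1 := by
    intro h hh
    rw [Polynomial.coeff_sub, hGk1, (hmem h hh).1, sub_zero]
  have hp_ne : ∀ h ∈ Vspace F k, G - h ≠ 0 := by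
    intro h hh h0
    apply hg
    have := hp_coeff h hh
    rw [h0] at this
    simpa using this.symm
  have hp_deg : ∀ h ∈ Vspace F k, (G - h).natDegree ≤ k := by
    intro h hh
    rw [Polynomial.natDegree_le_iff_coeff_eq_zero]
    intro N hN
    rw [Polynomial.coeff_sub, hGhi N hN, (hmem h hh).2 N hN, sub_zero]
  have hp_k : ∀ h ∈ Vspace F k, (G - h).coeff k = f.coeff k - h.coeff k := by
    intro h hh
    rw [Polynomial.coeff_sub, hGk]
  -- lower bound for w
  have hd_lb : n - k ≤ distToCode (esgrs k a v) w := by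
    apply DH.le_distToCode
    intro c hc
    rw [esgrs] at hc
    obtain ⟨h, hh, rfl⟩ := Submodule.mem_map.mp hc
    rw [hw, DH.dist_formula a v hv]
    exact le_trans (DH.le_nonvanish ha (hp_ne h hh) (hp_deg h hh)) (Nat.le_add_right _ _)
  -- upper bound for every word
  have hub : ∀ u : Fin (n+1) → F, distToCode (esgrs k a v) u ≤ n - k + 1 := by
    intro u
    set T : Finset (Fin n) :=
      (Finset.univ : Finset (Fin (k-1))).map (Fin.castLEEmb (by omega)) with hTdef
    have hT : T.card = k - 1 := by simp [hTdef]
    set r : Fin n → F :=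
      fun j => u (Fin.castSucc j) / v j - u (Fin.last n) * (a j)^k with hr
    set h0 : F[X] := Lagrange.interpolate T a r with hh0
    have hd0 : h0.degree < ((k-1 : ℕ) : WithBot ℕ) := by
      have := Lagrange.degree_interpolate_lt (s := T) (v := a) r
        (Set.injOn_of_injective ha)
      rwa [hT] at this
    have hc0 : ∀ N, k - 1 ≤ N → h0.coeff N = 0 := fun N hN =>
      Polynomial.coeff_eq_zero_of_degree_lt
        (lt_of_lt_of_le hd0 (by exact_mod_cast hN))
    set h : F[X] := h0 + Polynomial.C (u (Fin.last n)) * Polynomial.X ^ k with hhdef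
    have hhV : h ∈ Vspace F k := by
      constructor
      · show h.coeff (k-1) = 0
        rw [hhdef, Polynomial.coeff_add, hc0 _ le_rfl, Polynomial.coeff_C_mul,
          Polynomial.coeff_X_pow, if_neg (by omega)]
        simp
      · intro N hN
        show h.coeff N = 0
        rw [hhdef, Polynomial.coeff_add, hc0 N (by omega), Polynomial.coeff_C_mul,
          Polynomial.coeff_X_pow, if_neg (by omega)]
        simp
    have hhk : h.coeff k = u (Fin.last n) := by
      rw [hhdef, Polynomial.coeff_add, hc0 k (by omega), Polynomial.coeff_C_mul,
        Polynomial.coeff_X_pow, if_pos rfl]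
      simp
    set S : Finset (Fin (n+1)) := insert (Fin.last n) (T.map Fin.castSuccEmb) with hS
    have hlast_not : Fin.last n ∉ T.map Fin.castSuccEmb := by
      simp only [Finset.mem_map]
      rintro ⟨j, -, hj⟩
      exact absurd hj (Fin.castSucc_lt_last j).ne
    have hSc : S.card = k := by
      rw [hS, Finset.card_insert_of_notMem hlast_not, Finset.card_map, hT]
      omega
    have hagree : ∀ i ∈ S, u i = esgrsMap k a v h i := by
      intro i hi
      rcases Finset.mem_insert.mp hi with rfl | hi
      · rw [DH.esgrsMap_apply, Fin.snoc_last, hhk]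
      · obtain ⟨j, hjT, rfl⟩ := Finset.mem_map.mp hi
        rw [DH.esgrsMap_apply,
          show (Fin.castSuccEmb j : Fin (n+1)) = Fin.castSucc j from rfl,
          Fin.snoc_castSucc]
        have hev : h.eval (a j) = u (Fin.castSucc j) / v j := by
          rw [hhdef, Polynomial.eval_add, Polynomial.eval_mul, Polynomial.eval_C,
            Polynomial.eval_pow, Polynomial.eval_X, hh0,
            Lagrange.eval_interpolate_at_node r (Set.injOn_of_injective ha) hjT, hr]
          ring
        rw [hev, mul_comm, div_mul_cancel₀ _ (hv j)]
    have hmemc : esgrsMap k a v h ∈ esgrs k a v := by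
      rw [esgrs]; exact Submodule.mem_map_of_mem hhV
    calc distToCode (esgrs k a v) u ≤ hammingDist u (esgrsMap k a v h) :=
          DH.distToCode_le hmemc
      _ ≤ (Finset.univ \ S).card := by
          rw [show hammingDist u (esgrsMap k a v h) =
            (Finset.univ.filter fun i => u i ≠ esgrsMap k a v h i).card from rfl]
          apply Finset.card_le_card
          intro i hi
          rw [Finset.mem_filter] at hi
          rw [Finset.mem_sdiff]
          exact ⟨Finset.mem_univ i, fun hiS => hi.2 (hagree i hiS)⟩
      _ = n - k + 1 := by
          rw [Finset.card_sdiff_of_subset (Finset.subset_univ S), hSc, Finset.card_univ,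
            Fintype.card_fin]
          omega
  have hcov : covRad (esgrs k a v) = n - k + 1 := by
    refine le_antisymm (DH.covRad_le hub) ?_
    refine le_trans ?_ (DH.le_covRad
      (Fin.snoc (fun j => v j * (Polynomial.X ^ (k-1) : F[X]).eval (a j)) 0))
    apply DH.le_distToCode
    intro c hc
    rw [esgrs] at hc
    obtain ⟨h, hh, rfl⟩ := Submodule.mem_map.mp hc
    rw [DH.dist_formula a v hv]
    set p : F[X] := Polynomial.X ^ (k-1) - h with hpdef
    have hpc : p.coeff (k-1) = 1 := by
      rw [hpdef, Polynomial.coeff_sub, Polynomial.coeff_X_pow, if_pos rfl,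
        (hmem h hh).1, sub_zero]
    have hpne : p ≠ 0 := fun h0 => by rw [h0] at hpc; simp at hpc
    by_cases hk0 : h.coeff k = 0
    · have hdeg : p.natDegree ≤ k - 1 := by
        rw [Polynomial.natDegree_le_iff_coeff_eq_zero]
        intro N hN
        rcases eq_or_lt_of_le (show k ≤ N by omega) with rfl | hN'
        · rw [hpdef, Polynomial.coeff_sub, Polynomial.coeff_X_pow,
            if_neg (by omega), hk0, sub_zero]
        · rw [hpdef, Polynomial.coeff_sub, Polynomial.coeff_X_pow,
            if_neg (by omega), (hmem h hh).2 N hN', sub_zero]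
      have h1 := DH.le_nonvanish ha hpne hdeg
      have h2 : n - (k-1) = n - k + 1 := by omega
      rw [h2] at h1
      exact le_trans h1 (Nat.le_add_right _ _)
    · have hdeg : p.natDegree ≤ k := by
        rw [Polynomial.natDegree_le_iff_coeff_eq_zero]
        intro N hN
        rw [hpdef, Polynomial.coeff_sub, Polynomial.coeff_X_pow,
          if_neg (by omega), (hmem h hh).2 N hN, sub_zero]
      have h1 := DH.le_nonvanish ha hpne hdeg
      rw [if_neg (fun e => hk0 e.symm)]
      omega
  -- key characterization of distance n - k
  have hkey : distToCode (esgrs k a v) w = n - k ↔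
      ∃ s : Finset (Fin n), s.card = k ∧ ∑ j ∈ s, a j = δ := by
    constructor
    · intro hd
      obtain ⟨c, hc, hdist⟩ := DH.distToCode_attained (esgrs k a v) w
      rw [hd] at hdist
      rw [esgrs] at hc
      obtain ⟨h, hh, rfl⟩ := Submodule.mem_map.mp hc
      rw [hw, DH.dist_formula a v hv] at hdist
      have hnv := DH.le_nonvanish ha (hp_ne h hh) (hp_deg h hh)
      have hind : (if ulast * vlast = h.coeff k then 0 else 1) = 0 := by
        by_cases hq : ulast * vlast = h.coeff k
        · rw [if_pos hq]
        · rw [if_neg hq] at hdist ⊢; omega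
      have hck : h.coeff k = ulast * vlast := by
        by_contra hq
        rw [if_neg (fun e => hq e.symm)] at hind
        exact one_ne_zero hind
      rw [hind, add_zero] at hdist
      set T := Finset.univ.filter fun j => (G - h).eval (a j) = 0 with hTdef
      have hvle := DH.vanish_card_le ha (hp_ne h hh) (hp_deg h hh)
      have hnc := DH.nonvanish_card a (G - h)
      rw [hdist] at hnc
      have hTcard : T.card = k := by rw [hTdef]; omega
      refine ⟨T, hTcard, ?_⟩
      set lc := f.coeff k - ulast * vlast with hlcdef
      have hlc : lc ≠ 0 := sub_ne_zero.mpr (Ne.symm huv)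
      have hpk : (G - h).coeff k = lc := by rw [hp_k h hh, hck]
      set P : F[X] := ∏ j ∈ T, (Polynomial.X - Polynomial.C (a j)) with hPdef
      have hPd : P.natDegree = k := by rw [hPdef, DH.natDegree_prodXsubC, hTcard]
      have hPk : P.coeff k = 1 := by
        have := (DH.monic_prodXsubC a T).coeff_natDegree
        rwa [hPd] at this
      have hq0 : G - h - Polynomial.C lc * P = 0 := by
        by_contra hq0
        have hdq : (G - h - Polynomial.C lc * P).natDegree ≤ k - 1 := by
          rw [Polynomial.natDegree_le_iff_coeff_eq_zero]
          intro N hN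
          rcases eq_or_lt_of_le (show k ≤ N by omega) with rfl | hN'
          · rw [Polynomial.coeff_sub, hpk, Polynomial.coeff_C_mul, hPk, mul_one,
              sub_self]
          · rw [Polynomial.coeff_sub, Polynomial.coeff_sub, hGhi N hN',
              (hmem h hh).2 N hN', Polynomial.coeff_C_mul,
              Polynomial.coeff_eq_zero_of_natDegree_lt (hPd ▸ hN')]
            ring
        have hTsub : T ⊆ Finset.univ.filter
            fun j => (G - h - Polynomial.C lc * P).eval (a j) = 0 := by
          intro j hj
          rw [hTdef, Finset.mem_filter] at hj
          rw [Finset.mem_filter]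
          refine ⟨Finset.mem_univ j, ?_⟩
          rw [Polynomial.eval_sub, hj.2, Polynomial.eval_mul, Polynomial.eval_C,
            hPdef, Polynomial.eval_prod,
            Finset.prod_eq_zero (Finset.mem_filter.mpr hj)
              (by rw [Polynomial.eval_sub, Polynomial.eval_X, Polynomial.eval_C,
                sub_self])]
          ring
        have := le_trans (Finset.card_le_card hTsub) (DH.vanish_card_le ha hq0 hdq)
        omega
      have hPP : G - h = Polynomial.C lc * P := sub_eq_zero.mp hq0
      have hco := hp_coeff h hh
      rw [hPP, Polynomial.coeff_C_mul, hPdef,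
        DH.coeff_prodXsubC (by omega) a T hTcard] at hco
      rw [hδ, eq_mul_inv_iff_mul_eq₀ huv']
      rw [hlcdef] at hco
      linear_combination hco
    · rintro ⟨s, hs, hsum⟩
      set lc := f.coeff k - ulast * vlast with hlcdef
      have hlc : lc ≠ 0 := sub_ne_zero.mpr (Ne.symm huv)
      set P : F[X] := ∏ j ∈ s, (Polynomial.X - Polynomial.C (a j)) with hPdef
      have hPd : P.natDegree = k := by rw [hPdef, DH.natDegree_prodXsubC, hs]
      have hPk : P.coeff k = 1 := by
        have := (DH.monic_prodXsubC a s).coeff_natDegree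
        rwa [hPd] at this
      have hPk1 : P.coeff (k-1) = -δ := by
        rw [hPdef, DH.coeff_prodXsubC (by omega) a s hs, hsum]
      set h : F[X] := G - Polynomial.C lc * P with hhdef
      have hlcδ : lc * δ = -gkm1 := by
        rw [hlcdef, hδ]
        field_simp
        ring
      have hhV : h ∈ Vspace F k := by
        constructor
        · show h.coeff (k-1) = 0
          rw [hhdef, Polynomial.coeff_sub, hGk1, Polynomial.coeff_C_mul, hPk1]
          rw [mul_neg, hlcδ]
          ring
        · intro N hN
          show h.coeff N = 0
          rw [hhdef, Polynomial.coeff_sub, hGhi N hN, Polynomial.coeff_C_mul,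
            Polynomial.coeff_eq_zero_of_natDegree_lt (hPd ▸ hN)]
          ring
      have hck : h.coeff k = ulast * vlast := by
        rw [hhdef, Polynomial.coeff_sub, hGk, Polynomial.coeff_C_mul, hPk, mul_one,
          hlcdef]
        ring
      have hGh : G - h = Polynomial.C lc * P := by rw [hhdef]; ring
      have hmemc : esgrsMap k a v h ∈ esgrs k a v := by
        rw [esgrs]; exact Submodule.mem_map_of_mem hhV
      have hfilter : (Finset.univ.filter
          fun j => (G - h).eval (a j) ≠ 0) = sᶜ := by
        ext j
        rw [Finset.mem_filter, Finset.mem_compl, hGh]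
        simp only [Finset.mem_univ, true_and, Polynomial.eval_mul,
          Polynomial.eval_C, hPdef, Polynomial.eval_prod, Polynomial.eval_sub,
          Polynomial.eval_X, Polynomial.eval_C, mul_ne_zero_iff]
        constructor
        · rintro ⟨-, hprod⟩ hjs
          exact hprod (Finset.prod_eq_zero hjs (sub_self (a j)))
        · intro hjs
          refine ⟨hlc, ?_⟩
          rw [Finset.prod_ne_zero_iff]
          intro i hi
          rw [sub_ne_zero]
          exact fun e => hjs (ha e ▸ hi)
      have hdist : hammingDist w (esgrsMap k a v h) = n - k := by
        rw [hw, DH.dist_formula a v hv, if_pos hck.symm, add_zero, hfilter,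
          Finset.card_compl, hs, Fintype.card_fin]
      exact le_antisymm (hdist ▸ DH.distToCode_le hmemc) hd_lb
  -- conclude
  rw [IsDeepHole, hcov]
  constructor
  · intro hdh s hscard hssum
    have h1 : distToCode (esgrs k a v) w = n - k := hkey.mpr ⟨s, hscard, hssum⟩
    omega
  · intro hP
    have h1 : distToCode (esgrs k a v) w ≠ n - k := fun hd => by
      obtain ⟨s, hs1, hs2⟩ := hkey.mp hd
      exact hP s hs1 hs2
    have h2 := hub w
    omega
end

section
/- For 3 ≤ k ≤ n ≤ q and δ ∈ F_q, the Roth–Lempel code RL_{k,δ}(S), defined by the generator matrix whose rows evaluate 1, x, ..., x^{k-1} at a_1,...,a_n with two extra columns (0,...,0,0,1)^T and (0,...,0,1,δ)^T, is an [n+2, k, n-k+3] MDS code if and only if S = {a_1,...,a_n} is an (n, k-1, δ)-set. -/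
open Finset Polynomial

section DefsRL
variable {F : Type*} [Field F] [DecidableEq F]

noncomputable def rlMap {n : ℕ} (k : ℕ) (a : Fin n → F) (δ : F) :
    Polynomial F →ₗ[F] (Fin (n + 2) → F) where
  toFun f :=
    Fin.snoc (Fin.snoc (fun j => f.eval (a j)) (f.coeff (k - 1)))
      (f.coeff (k - 2) + δ * f.coeff (k - 1))
  map_add' f g := by
    funext i
    refine Fin.lastCases ?_ (fun j => ?_) i
    · simp [Fin.snoc_last]; ring
    · refine Fin.lastCases ?_ (fun j' => ?_) j
      · simp [Fin.snoc_castSucc, Fin.snoc_last]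
      · simp [Fin.snoc_castSucc]
  map_smul' r f := by
    funext i
    refine Fin.lastCases ?_ (fun j => ?_) i
    · simp [Fin.snoc_last]; ring
    · refine Fin.lastCases ?_ (fun j' => ?_) j
      · simp [Fin.snoc_castSucc, Fin.snoc_last]
      · simp [Fin.snoc_castSucc]

noncomputable def rlCode {n : ℕ} (k : ℕ) (a : Fin n → F) (δ : F) :
    Submodule F (Fin (n + 2) → F) :=
  Submodule.map (rlMap k a δ) (Polynomial.degreeLT F k)

end DefsRL


section Helpers
set_option linter.unusedSectionVars false
variable {F : Type*} [Field F] [DecidableEq F]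

lemma hammingNorm_snoc {m : ℕ} (v : Fin m → F) (x : F) :
    hammingNorm (Fin.snoc v x : Fin (m+1) → F) = hammingNorm v + if x = 0 then 0 else 1 := by
  simp only [hammingNorm, Finset.card_filter]
  rw [Fin.sum_univ_castSucc]
  simp only [Fin.snoc_castSucc, Fin.snoc_last]
  congr 1
  split <;> rename_i h <;> simp only [ne_eq, not_not] at h <;> simp [h]

lemma hammingNorm_eval {n : ℕ} (a : Fin n → F) (f : Polynomial F) :
    hammingNorm (fun j => f.eval (a j)) =
      n - (Finset.univ.filter (fun j => f.eval (a j) = 0)).card := by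
  have h := Finset.card_filter_add_card_filter_not
    (s := (Finset.univ : Finset (Fin n))) (p := fun j => f.eval (a j) ≠ 0)
  simp only [Finset.card_univ, Fintype.card_fin, ne_eq, not_not] at h
  simp only [hammingNorm, ne_eq]
  omega

lemma card_zeros_le {n : ℕ} {a : Fin n → F} (ha : Function.Injective a)
    {f : Polynomial F} (hf : f ≠ 0) :
    (Finset.univ.filter (fun j => f.eval (a j) = 0)).card ≤ f.natDegree := by
  classical
  set Z := Finset.univ.filter (fun j => f.eval (a j) = 0) with hZ
  have himg : Z.image a ⊆ f.roots.toFinset := by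
    intro x hx
    simp only [Finset.mem_image] at hx
    obtain ⟨j, hj, rfl⟩ := hx
    rw [Multiset.mem_toFinset, Polynomial.mem_roots hf]
    exact (Finset.mem_filter.mp hj).2
  calc Z.card = (Z.image a).card := (Finset.card_image_of_injective _ ha).symm
    _ ≤ f.roots.toFinset.card := Finset.card_le_card himg
    _ ≤ Multiset.card f.roots := f.roots.toFinset_card_le
    _ ≤ f.natDegree := f.card_roots'

lemma prodXsubC_natDegree {n : ℕ} (a : Fin n → F) (s : Finset (Fin n)) :
    (∏ j ∈ s, (X - C (a j))).natDegree = s.card := by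
  rw [Finset.prod_eq_multiset_prod]
  have : s.val.map (fun j => X - C (a j)) = (s.val.map a).map (fun r => X - C r) := by
    rw [Multiset.map_map]; rfl
  rw [this, Polynomial.natDegree_multiset_prod_X_sub_C_eq_card, Multiset.card_map]
  rfl

lemma prodXsubC_monic {n : ℕ} (a : Fin n → F) (s : Finset (Fin n)) :
    (∏ j ∈ s, (X - C (a j))).Monic :=
  monic_prod_of_monic _ _ (fun j _ => monic_X_sub_C (a j))

lemma rl_factorization {n : ℕ} {a : Fin n → F} (ha : Function.Injective a)
    {f : Polynomial F} (hf : f ≠ 0) {Z : Finset (Fin n)}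
    (hroot : ∀ j ∈ Z, f.eval (a j) = 0) (hcard : Z.card = f.natDegree) :
    f = C f.leadingCoeff * ∏ j ∈ Z, (X - C (a j)) := by
  classical
  have hnodup : (Z.val.map a).Nodup := Z.nodup.map ha
  have hle : Z.val.map a ≤ f.roots := by
    rw [Multiset.le_iff_subset hnodup]
    intro x hx
    obtain ⟨j, hj, rfl⟩ := Multiset.mem_map.mp hx
    rw [Polynomial.mem_roots hf]
    exact hroot j hj
  have hcard2 : Multiset.card f.roots ≤ Multiset.card (Z.val.map a) := by
    rw [Multiset.card_map]
    calc Multiset.card f.roots ≤ f.natDegree := f.card_roots'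
      _ = Z.card := hcard.symm
  have hroots : f.roots = Z.val.map a := (Multiset.eq_of_le_of_card_le hle hcard2).symm
  have hsplit : Polynomial.Splits f := by
    rw [Polynomial.splits_iff_card_roots, hroots, Multiset.card_map]
    exact hcard
  have h2 := hsplit.eq_prod_roots
  rw [hroots] at h2
  calc f = C f.leadingCoeff * (Multiset.map (fun r => X - C r) (Multiset.map a Z.val)).prod := h2
    _ = C f.leadingCoeff * ∏ j ∈ Z, (X - C (a j)) := by
        rw [Finset.prod_eq_multiset_prod, Multiset.map_map]; rfl

end Helpers

section Main
variable {F : Type*} [Field F] [DecidableEq F]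

set_option linter.unusedSectionVars false

lemma rl_norm {n : ℕ} (k : ℕ) (a : Fin n → F) (δ : F) (f : Polynomial F) :
    hammingNorm (rlMap k a δ f) =
      (n - (Finset.univ.filter (fun j => f.eval (a j) = 0)).card)
      + (if f.coeff (k-1) = 0 then 0 else 1)
      + (if f.coeff (k-2) + δ * f.coeff (k-1) = 0 then 0 else 1) := by
  have he : (rlMap k a δ f) = (Fin.snoc (Fin.snoc (fun j => f.eval (a j)) (f.coeff (k-1)))
      (f.coeff (k-2) + δ * f.coeff (k-1)) : Fin (n+2) → F) := rfl
  rw [he, hammingNorm_snoc, hammingNorm_snoc, hammingNorm_eval]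

lemma zero_filter_prod {n : ℕ} {a : Fin n → F} (ha : Function.Injective a)
    (s : Finset (Fin n)) :
    Finset.univ.filter (fun j => (∏ i ∈ s, (X - C (a i))).eval (a j) = 0) = s := by
  ext j
  simp only [Finset.mem_filter, Finset.mem_univ, true_and, Polynomial.eval_prod,
    Polynomial.eval_sub, Polynomial.eval_X, Polynomial.eval_C,
    Finset.prod_eq_zero_iff, sub_eq_zero]
  constructor
  · rintro ⟨i, hi, h⟩; rwa [ha h]
  · intro hj; exact ⟨j, hj, rfl⟩

lemma rl_norm_prod {n k : ℕ} (hk : 3 ≤ k) (hkn : k ≤ n) {a : Fin n → F}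
    (ha : Function.Injective a) (δ : F) {s : Finset (Fin n)} (hs : s.card = k - 1) :
    hammingNorm (rlMap k a δ (∏ i ∈ s, (X - C (a i)))) =
      (n - k + 2) + (if -∑ i ∈ s, a i + δ = 0 then 0 else 1) := by
  set g := ∏ i ∈ s, (X - C (a i)) with hg
  have hdeg : g.natDegree = k - 1 := by rw [hg, prodXsubC_natDegree, hs]
  have hc1 : g.coeff (k - 1) = 1 := by
    have := (prodXsubC_monic a s).coeff_natDegree
    rwa [hdeg] at this
  have hc2 : g.coeff (k - 2) = -∑ i ∈ s, a i := by
    have := prod_X_sub_C_coeff_card_pred s a (by omega : 0 < s.card)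
    rw [hs] at this
    have h21 : k - 1 - 1 = k - 2 := by omega
    rwa [h21] at this
  rw [rl_norm, zero_filter_prod ha, hc1, hc2, hs]
  have h1 : ¬ (1 : F) = 0 := one_ne_zero
  rw [if_neg h1, mul_one]
  have hnk : n - (k - 1) = n - k + 1 := by omega
  omega

lemma rl_lower_bound {n k : ℕ} (hk : 3 ≤ k) (hkn : k ≤ n) {a : Fin n → F}
    (ha : Function.Injective a) {δ : F}
    (H : ∀ s : Finset (Fin n), s.card = k - 1 → ∑ j ∈ s, a j ≠ δ)
    {f : Polynomial F} (hfd : f.degree < (k : ℕ)) (hf0 : f ≠ 0) :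
    n - k + 3 ≤ hammingNorm (rlMap k a δ f) := by
  rw [rl_norm]
  set Z := Finset.univ.filter (fun j => f.eval (a j) = 0) with hZ
  have hzd : Z.card ≤ f.natDegree := card_zeros_le ha hf0
  have hd : f.natDegree ≤ k - 1 := by
    have := (Polynomial.natDegree_lt_iff_degree_lt hf0).mpr hfd
    omega
  by_cases hcase : f.natDegree ≤ k - 3
  · omega
  · by_cases hcase2 : f.natDegree = k - 2
    · have hc1 : f.coeff (k - 1) = 0 :=
        Polynomial.coeff_eq_zero_of_natDegree_lt (by omega)
      have hc2 : f.coeff (k - 2) ≠ 0 := by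
        rw [← hcase2]; exact Polynomial.leadingCoeff_ne_zero.mpr hf0
      rw [hc1, mul_zero, add_zero, if_neg hc2]
      omega
    · have hdeq : f.natDegree = k - 1 := by omega
      have hc1 : f.coeff (k - 1) ≠ 0 := by
        rw [← hdeq]; exact Polynomial.leadingCoeff_ne_zero.mpr hf0
      rw [if_neg hc1]
      by_cases hz : Z.card ≤ k - 2
      · omega
      · have hzc : Z.card = k - 1 := by omega
        have hlast : f.coeff (k - 2) + δ * f.coeff (k - 1) ≠ 0 := by
          intro heq
          have hfac := rl_factorization ha hf0
            (fun j hj => (Finset.mem_filter.mp hj).2) (hzc.trans hdeq.symm)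
          set c := f.leadingCoeff with hc
          have hcne : c ≠ 0 := Polynomial.leadingCoeff_ne_zero.mpr hf0
          have hg1 : (∏ j ∈ Z, (X - C (a j))).coeff (k - 1) = 1 := by
            have := (prodXsubC_monic a Z).coeff_natDegree
            rwa [prodXsubC_natDegree, hzc] at this
          have hg2 : (∏ j ∈ Z, (X - C (a j))).coeff (k - 2) = -∑ j ∈ Z, a j := by
            have := prod_X_sub_C_coeff_card_pred Z a (by omega : 0 < Z.card)
            rw [hzc] at this
            have h21 : k - 1 - 1 = k - 2 := by omega
            rwa [h21] at this
          have e1 : f.coeff (k - 1) = c := by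
            rw [hfac, Polynomial.coeff_C_mul, hg1, mul_one]
          have e2 : f.coeff (k - 2) = c * (-∑ j ∈ Z, a j) := by
            rw [hfac, Polynomial.coeff_C_mul, hg2]
          rw [e1, e2] at heq
          have hsum : ∑ j ∈ Z, a j = δ := by
            have : c * (δ - ∑ j ∈ Z, a j) = 0 := by ring_nf; ring_nf at heq; linear_combination heq
            rcases mul_eq_zero.mp this with h | h
            · exact absurd h hcne
            · exact (sub_eq_zero.mp h).symm
          exact H Z hzc hsum
        rw [if_neg hlast]
        omega

lemma rl_inj {n k : ℕ} (hkn : k ≤ n) {a : Fin n → F} (ha : Function.Injective a)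
    (δ : F) {f : Polynomial F} (hfd : f ∈ Polynomial.degreeLT F k)
    (h0 : rlMap k a δ f = 0) : f = 0 := by
  by_contra hf0
  have heval : ∀ j, f.eval (a j) = 0 := by
    intro j
    have := congrFun h0 ((j.castSucc).castSucc)
    simpa [rlMap, Fin.snoc_castSucc] using this
  have hall : (Finset.univ.filter (fun j => f.eval (a j) = 0)) = Finset.univ := by
    ext j; simp [heval j]
  have hle := card_zeros_le ha hf0 (a := a)
  rw [hall, Finset.card_univ, Fintype.card_fin] at hle
  have hd : f.natDegree < k :=
    (Polynomial.natDegree_lt_iff_degree_lt hf0).mpr (Polynomial.mem_degreeLT.mp hfd)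
  omega

lemma rl_finrank {n k : ℕ} (hkn : k ≤ n) {a : Fin n → F} (ha : Function.Injective a)
    (δ : F) : Module.finrank F ↥(rlCode k a δ) = k := by
  have hrange : rlCode k a δ =
      LinearMap.range ((rlMap k a δ).comp (Polynomial.degreeLT F k).subtype) := by
    rw [LinearMap.range_comp, Submodule.range_subtype]; rfl
  have hinj : Function.Injective ((rlMap k a δ).comp (Polynomial.degreeLT F k).subtype) := by
    intro f g hfg
    simp only [LinearMap.comp_apply, Submodule.subtype_apply] at hfg
    have h0 : rlMap k a δ ((f : Polynomial F) - g) = 0 := by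
      rw [map_sub, hfg, sub_self]
    have := rl_inj hkn ha δ (Submodule.sub_mem _ f.2 g.2) h0
    exact Subtype.ext (sub_eq_zero.mp this)
  rw [hrange, LinearMap.finrank_range_of_inj hinj,
    LinearEquiv.finrank_eq (Polynomial.degreeLTEquiv F k), Module.finrank_fin_fun]

end Main

theorem stmt_13 {F : Type*} [Field F] [Fintype F] [DecidableEq F] {n k : ℕ}
    (hk : 3 ≤ k) (hkn : k ≤ n) (hn : n ≤ Fintype.card F)
    (a : Fin n → F) (ha : Function.Injective a) (δ : F) :
    (Module.finrank F ↥(rlCode k a δ) = k ∧ minWt (rlCode k a δ) = n - k + 3) ↔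
      ∀ s : Finset (Fin n), s.card = k - 1 → ∑ j ∈ s, a j ≠ δ := by
  have degmem : ∀ s : Finset (Fin n), s.card = k - 1 →
      (∏ i ∈ s, (X - C (a i))) ∈ Polynomial.degreeLT F k := by
    intro s hs
    rw [Polynomial.mem_degreeLT]
    apply lt_of_le_of_lt Polynomial.degree_le_natDegree
    rw [prodXsubC_natDegree, hs]
    exact_mod_cast (show k - 1 < k by omega)
  have nonzero : ∀ s : Finset (Fin n), s.card = k - 1 →
      rlMap k a δ (∏ i ∈ s, (X - C (a i))) ≠ 0 := by
    intro s hs h0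
    exact (prodXsubC_monic a s).ne_zero (rl_inj hkn ha δ (degmem s hs) h0)
  constructor
  · rintro ⟨-, hmin⟩ s hs hsum
    have hwt : hammingNorm (rlMap k a δ (∏ i ∈ s, (X - C (a i)))) = n - k + 2 := by
      rw [rl_norm_prod hk hkn ha δ hs, hsum, if_pos (by ring)]
    have hmem : rlMap k a δ (∏ i ∈ s, (X - C (a i))) ∈ rlCode k a δ :=
      ⟨_, degmem s hs, rfl⟩
    have hle : minWt (rlCode k a δ) ≤ n - k + 2 :=
      Nat.sInf_le ⟨_, hmem, nonzero s hs, hwt⟩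
    omega
  · intro H
    refine ⟨rl_finrank hkn ha δ, ?_⟩
    obtain ⟨s, -, hs⟩ := Finset.exists_subset_card_eq (s := (Finset.univ : Finset (Fin n)))
      (n := k - 1) (by simpa using (show k - 1 ≤ n by omega))
    have hwt : hammingNorm (rlMap k a δ (∏ i ∈ s, (X - C (a i)))) = n - k + 3 := by
      rw [rl_norm_prod hk hkn ha δ hs, if_neg (by
        intro h0
        exact H s hs (by linear_combination -h0))]
    have hmem0 : (n - k + 3) ∈
        {w | ∃ c ∈ rlCode k a δ, c ≠ 0 ∧ hammingNorm c = w} :=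
      ⟨_, ⟨_, degmem s hs, rfl⟩, nonzero s hs, hwt⟩
    refine le_antisymm (Nat.sInf_le hmem0) (le_csInf ⟨_, hmem0⟩ ?_)
    rintro w ⟨c, hcmem, hcne, rfl⟩
    obtain ⟨f, hf, rfl⟩ := hcmem
    have hf0 : f ≠ 0 := by
      rintro rfl
      exact hcne (map_zero _)
    exact rl_lower_bound hk hkn ha H (Polynomial.mem_degreeLT.mp hf) hf0
end

section
/- Let a_1,...,a_s be elements of a field F, and let {t_1 < t_2 < ... < t_s} ∪ {r_1 < ... < r_{s'}} be a partition of {0,1,...,m-1} with m = s + s', t_1 = 0 and t_s = m-1. Then det of the s×s matrix (a_j^{t_i})_{i,j} equals ∏_{1 ≤ i < j ≤ s}(a_j - a_i) times det of the s'×s' matrix whose (p, l) entry is σ_{s - r_l + p - 1}(a_1,...,a_s), where σ_i is the i-th elementary symmetric polynomial (with σ_i = 0 for i < 0 or i > s, and σ_0 = 1). -/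
open Finset Polynomial

open Matrix Equiv

lemma sign_inversions {n : ℕ} (π : Equiv.Perm (Fin n)) :
    ((Equiv.Perm.sign π : ℤ) : ℚ) =
      ∏ i : Fin n, ∏ j ∈ Finset.Ioi i, (if π j < π i then (-1 : ℚ) else 1) := by
  have hdet := Matrix.det_permute π (Matrix.vandermonde (fun i : Fin n => (i : ℚ)))
  have hsub : (Matrix.vandermonde fun i : Fin n => (i : ℚ)).submatrix (⇑π) id
      = Matrix.vandermonde (fun i => ((π i : ℕ) : ℚ)) := by
    ext i j; simp [Matrix.vandermonde]
  rw [hsub, Matrix.det_vandermonde, Matrix.det_vandermonde] at hdet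
  rw [Finset.prod_sigma' univ (fun i => Ioi i)
      (fun i j => (((π j : ℕ) : ℚ) - ((π i : ℕ) : ℚ)))] at hdet
  rw [Finset.prod_sigma' univ (fun i => Ioi i)
      (fun i j : Fin n => (((j : ℕ) : ℚ) - ((i : ℕ) : ℚ)))] at hdet
  rw [Finset.prod_sigma' univ (fun i => Ioi i)
      (fun i j : Fin n => (if π j < π i then (-1 : ℚ) else 1))]
  set S := (univ : Finset (Fin n)).sigma (fun i => Ioi i) with hS
  have hmem : ∀ x : Σ _ : Fin n, Fin n, x ∈ S ↔ x.1 < x.2 := by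
    intro x; simp [hS, Finset.mem_sigma, Finset.mem_Ioi]
  -- split each factor
  have hsplit : ∏ x ∈ S, (((π x.2 : ℕ) : ℚ) - ((π x.1 : ℕ) : ℚ))
      = (∏ x ∈ S, (if π x.2 < π x.1 then (-1 : ℚ) else 1)) *
        ∏ x ∈ S, (((if π x.2 < π x.1 then (⟨π x.2, π x.1⟩ : Σ _ : Fin n, Fin n) else ⟨π x.1, π x.2⟩).2 : ℕ) -
          (((if π x.2 < π x.1 then (⟨π x.2, π x.1⟩ : Σ _ : Fin n, Fin n) else ⟨π x.1, π x.2⟩).1 : ℕ) : ℚ)) := by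
    rw [← Finset.prod_mul_distrib]
    refine Finset.prod_congr rfl ?_
    intro x hx
    by_cases h : π x.2 < π x.1
    · simp only [if_pos h]
      push_cast
      ring
    · simp only [if_neg h]
      push_cast
      ring
  have hbij : ∏ x ∈ S, (((if π x.2 < π x.1 then (⟨π x.2, π x.1⟩ : Σ _ : Fin n, Fin n) else ⟨π x.1, π x.2⟩).2 : ℕ) -
          (((if π x.2 < π x.1 then (⟨π x.2, π x.1⟩ : Σ _ : Fin n, Fin n) else ⟨π x.1, π x.2⟩).1 : ℕ) : ℚ))
      = ∏ x ∈ S, (((x.2 : ℕ) : ℚ) - ((x.1 : ℕ) : ℚ)) := by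
    refine Finset.prod_nbij'
      (fun x => if π x.2 < π x.1 then (⟨π x.2, π x.1⟩ : Σ _ : Fin n, Fin n) else ⟨π x.1, π x.2⟩)
      (fun x => if π.symm x.2 < π.symm x.1 then (⟨π.symm x.2, π.symm x.1⟩ : Σ _ : Fin n, Fin n)
        else ⟨π.symm x.1, π.symm x.2⟩) ?_ ?_ ?_ ?_ ?_
    · intro x hx
      rw [hmem] at hx ⊢
      by_cases h : π x.2 < π x.1
      · simpa [h] using h
      · have : π x.1 ≠ π x.2 := fun hc => absurd (π.injective hc) (ne_of_lt hx)
        simp only [if_neg h]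
        exact lt_of_le_of_ne (not_lt.mp h) this
    · intro x hx
      rw [hmem] at hx ⊢
      by_cases h : π.symm x.2 < π.symm x.1
      · simpa [h] using h
      · have : π.symm x.1 ≠ π.symm x.2 := fun hc => absurd (π.symm.injective hc) (ne_of_lt hx)
        simp only [if_neg h]
        exact lt_of_le_of_ne (not_lt.mp h) this
    · intro x hx
      rw [hmem] at hx
      by_cases h : π x.2 < π x.1
      · simp [h, hx, not_lt.mpr (le_of_lt hx)]
      · have h' : π x.1 < π x.2 := by
          have : π x.1 ≠ π x.2 := fun hc => absurd (π.injective hc) (ne_of_lt hx)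
          exact lt_of_le_of_ne (not_lt.mp h) this
        simp [h, hx, not_lt.mpr (le_of_lt hx)]
    · intro x hx
      rw [hmem] at hx
      by_cases h : π.symm x.2 < π.symm x.1
      · simp [h, hx, not_lt.mpr (le_of_lt hx)]
      · have h' : π.symm x.1 < π.symm x.2 := by
          have : π.symm x.1 ≠ π.symm x.2 := fun hc => absurd (π.symm.injective hc) (ne_of_lt hx)
          exact lt_of_le_of_ne (not_lt.mp h) this
        simp [h, hx, not_lt.mpr (le_of_lt hx)]
    · intro x hx; rfl
  rw [hbij] at hsplit
  have hDpos : (0:ℚ) < ∏ x ∈ S, (((x.2 : ℕ) : ℚ) - ((x.1 : ℕ) : ℚ)) := by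
    refine Finset.prod_pos ?_
    intro x hx
    rw [hmem] at hx
    have : (x.1 : ℕ) < (x.2 : ℕ) := hx
    have := Nat.cast_lt (α := ℚ) |>.mpr this
    linarith
  rw [hsplit] at hdet
  exact (mul_right_cancel₀ (ne_of_gt hDpos) hdet).symm

noncomputable def esymZ {R : Type*} [CommRing R] {s : ℕ} (a : Fin s → R) (i : ℤ) : R :=
  if 0 ≤ i then ∑ T ∈ Finset.univ.powersetCard i.toNat, ∏ j ∈ T, a j else 0

theorem stmt_15 {F : Type*} [Field F] {s s' m : ℕ} (hm : m = s + s') (hs : 0 < s)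
    (t : Fin s → ℕ) (r : Fin s' → ℕ) (ht : StrictMono t) (hr : StrictMono r)
    (hunion : Finset.image t Finset.univ ∪ Finset.image r Finset.univ = Finset.range m)
    (hdisj : Disjoint (Finset.image t Finset.univ) (Finset.image r Finset.univ))
    (ht0 : t ⟨0, hs⟩ = 0) (htlast : t ⟨s - 1, by omega⟩ = m - 1)
    (a : Fin s → F) :
    (Matrix.of fun i j : Fin s => a j ^ t i).det
      = (∏ i : Fin s, ∏ j ∈ Finset.Ioi i, (a j - a i)) *
        (Matrix.of fun p l : Fin s' => esymZ a ((s : ℤ) - (r l : ℤ) + (p : ℤ))).det := by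
  classical
  -- basic bounds
  have htm : ∀ x : Fin s, t x < m := by
    intro x
    have : t x ∈ Finset.range m := by
      rw [← hunion]; exact Finset.mem_union_left _ (Finset.mem_image_of_mem t (Finset.mem_univ x))
    exact Finset.mem_range.mp this
  have hrm : ∀ p : Fin s', r p < m := by
    intro p
    have : r p ∈ Finset.range m := by
      rw [← hunion]; exact Finset.mem_union_right _ (Finset.mem_image_of_mem r (Finset.mem_univ p))
    exact Finset.mem_range.mp this
  have htr : ∀ x p, t x ≠ r p := by
    intro x p h
    exact Finset.disjoint_left.mp hdisj (Finset.mem_image_of_mem t (Finset.mem_univ x))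
      (h ▸ Finset.mem_image_of_mem r (Finset.mem_univ p))
  set tF : Fin s → Fin m := fun x => ⟨t x, htm x⟩ with htF
  set rF : Fin s' → Fin m := fun p => ⟨r p, hrm p⟩ with hrF
  -- the equiv φ
  have hφbij : Function.Bijective (Sum.elim tF rF) := by
    rw [Fintype.bijective_iff_injective_and_card]
    constructor
    · intro x y h
      match x, y with
      | Sum.inl x, Sum.inl y =>
        simp only [Sum.elim_inl, htF] at h
        exact congrArg Sum.inl (ht.injective (by simpa using congrArg Fin.val h))
      | Sum.inl x, Sum.inr y =>
        exact absurd (congrArg Fin.val h) (by simpa [htF, hrF] using htr x y)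
      | Sum.inr x, Sum.inl y =>
        exact absurd (congrArg Fin.val h).symm (by simpa [htF, hrF] using htr y x)
      | Sum.inr x, Sum.inr y =>
        simp only [Sum.elim_inr, hrF] at h
        exact congrArg Sum.inr (hr.injective (by simpa using congrArg Fin.val h))
    · simp [hm]
  set φ : (Fin s ⊕ Fin s') ≃ Fin m := Equiv.ofBijective _ hφbij with hφdef
  have hφl : ∀ x, φ (Sum.inl x) = tF x := fun x => rfl
  have hφr : ∀ p, φ (Sum.inr p) = rF p := fun p => rfl
  set ψ : (Fin s ⊕ Fin s') ≃ Fin m := finSumFinEquiv.trans (finCongr hm.symm) with hψdef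
  have hψl : ∀ x : Fin s, (ψ (Sum.inl x) : ℕ) = (x : ℕ) := by
    intro x; simp [hψdef]
  have hψr : ∀ p : Fin s', (ψ (Sum.inr p) : ℕ) = s + (p : ℕ) := by
    intro p; simp [hψdef]
  -- the polynomial
  set P : Polynomial F := ∏ j : Fin s, (X - C (a j)) with hP
  have hPmonic : P.Monic := monic_prod_of_monic _ _ (fun j _ => monic_X_sub_C (a j))
  have hPdeg : P.natDegree = s := by
    rw [hP, natDegree_prod _ _ (fun j _ => X_sub_C_ne_zero (a j))]
    simp [natDegree_X_sub_C]
  have hPeval : ∀ j : Fin s, P.eval (a j) = 0 := by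
    intro j
    rw [hP, eval_prod]
    exact Finset.prod_eq_zero (Finset.mem_univ j) (by simp)
  -- row polynomials
  set f : Fin m → Polynomial F := fun u => if (u : ℕ) < s then X ^ (u : ℕ) else X ^ ((u : ℕ) - s) * P
    with hf
  have hfmonic : ∀ u, (f u).Monic := by
    intro u; rw [hf]; dsimp only
    split
    · exact monic_X_pow _
    · exact (monic_X_pow _).mul hPmonic
  have hfdeg : ∀ u : Fin m, (f u).natDegree = (u : ℕ) := by
    intro u; rw [hf]; dsimp only
    split
    · exact natDegree_X_pow _
    · rw [natDegree_mul (pow_ne_zero _ X_ne_zero) hPmonic.ne_zero, natDegree_X_pow, hPdeg]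
      omega
  -- the triangular matrix L
  set L : Matrix (Fin m) (Fin m) F := Matrix.of fun u k => (f u).coeff (k : ℕ) with hL
  have hdetL : L.det = 1 := by
    have htri : L.BlockTriangular ⇑OrderDual.toDual := by
      intro i j hji
      have hij : (i : ℕ) < (j : ℕ) := hji
      have : (f i).natDegree < (j : ℕ) := by rw [hfdeg]; exact hij
      simpa [hL] using coeff_eq_zero_of_natDegree_lt this
    rw [Matrix.det_of_lowerTriangular L htri]
    have hdiag : ∀ u : Fin m, L u u = 1 := by
      intro u
      have h1 := (hfmonic u).coeff_natDegree
      rw [hfdeg] at h1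
      simpa [hL] using h1
    simp [hdiag]
  -- the matrix A with evaluation columns and signed unit columns
  set A : Matrix (Fin m) (Fin s ⊕ Fin s') F := Matrix.of fun k c =>
    Sum.elim (fun j => a j ^ (k : ℕ)) (fun v => if k = rF v then (-1 : F) ^ (s + (v:ℕ) + r v) else 0) c with hA
  set B := L * A with hB
  have hBl : ∀ (u : Fin m) (j : Fin s), B u (Sum.inl j) = (f u).eval (a j) := by
    intro u j
    rw [hB, Matrix.mul_apply]
    rw [eval_eq_sum_range' (lt_of_le_of_lt (le_of_eq (hfdeg u)) u.isLt) (a j)]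
    rw [← Fin.sum_univ_eq_sum_range (fun i => (f u).coeff i * a j ^ i) m]
    rfl
  have hBr : ∀ (u : Fin m) (v : Fin s'), B u (Sum.inr v) = (f u).coeff (r v) * (-1:F)^(s + (v:ℕ) + r v) := by
    intro u v
    rw [hB, Matrix.mul_apply]
    have : ∀ k : Fin m, L u k * A k (Sum.inr v)
        = if k = rF v then (f u).coeff (r v) * (-1:F)^(s + (v:ℕ) + r v) else 0 := by
      intro k
      by_cases h : k = rF v
      · subst h; simp [hL, hA, hrF]
      · simp [hL, hA, h]
    rw [Finset.sum_congr rfl (fun k _ => this k), Finset.sum_ite_eq' univ (rF v)]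
    simp
  -- coefficients of P
  have hPcoeff : ∀ k : ℕ, k ≤ s → P.coeff k
      = (-1 : F) ^ (s - k) * ∑ T ∈ Finset.univ.powersetCard (s - k), ∏ j ∈ T, a j := by
    intro k hk
    have hcard : Multiset.card (Multiset.map a Finset.univ.val) = s := by simp
    have := Multiset.prod_X_sub_C_coeff (Multiset.map a (Finset.univ.val : Multiset (Fin s)))
      (k := k) (by rw [hcard]; exact hk)
    rw [Multiset.map_map, hcard] at this
    rw [Finset.esymm_map_val] at this
    convert this using 2
    · rfl
    · rw [hP]; rfl
  have hXpP : ∀ (p k : ℕ), (X ^ p * P).coeff k = if p ≤ k then P.coeff (k - p) else 0 := by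
    intro p k
    rw [(commute_X_pow P p).eq, coeff_mul_X_pow']
  -- the key entry computation for the lower-right block
  have hD : ∀ (p v : Fin s'), (X ^ (p:ℕ) * P).coeff (r v) * (-1:F) ^ (s + (v:ℕ) + r v)
      = (-1:F) ^ ((p:ℕ) + (v:ℕ)) * esymZ a ((s : ℤ) - (r v : ℤ) + ((p:ℕ) : ℤ)) := by
    intro p v
    rw [hXpP]
    by_cases hpv : (p:ℕ) ≤ r v
    · rw [if_pos hpv]
      by_cases hle : r v - (p:ℕ) ≤ s
      · rw [hPcoeff _ hle]
        have h0 : (0:ℤ) ≤ (s : ℤ) - (r v : ℤ) + ((p:ℕ) : ℤ) := by omega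
        have htn : ((s : ℤ) - (r v : ℤ) + ((p:ℕ) : ℤ)).toNat = s - (r v - (p:ℕ)) := by omega
        rw [esymZ, if_pos h0, htn]
        rw [mul_comm ((-1:F) ^ (s - (r v - (p:ℕ)))) _, mul_assoc, ← pow_add, mul_comm]
        congr 1
        rw [neg_one_pow_eq_pow_mod_two, neg_one_pow_eq_pow_mod_two (n := (p:ℕ) + (v:ℕ))]
        congr 1
        omega
      · rw [coeff_eq_zero_of_natDegree_lt (by omega : P.natDegree < r v - (p:ℕ))]
        rw [esymZ, if_neg (by omega), mul_zero, zero_mul]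
    · rw [if_neg hpv, zero_mul]
      have h0 : (0:ℤ) ≤ (s : ℤ) - (r v : ℤ) + ((p:ℕ) : ℤ) := by omega
      have htn : s < ((s : ℤ) - (r v : ℤ) + ((p:ℕ) : ℤ)).toNat := by omega
      rw [esymZ, if_pos h0]
      rw [Finset.powersetCard_eq_empty.mpr (by simpa using htn), Finset.sum_empty, mul_zero]
  -- f along the ψ ordering
  have hfl : ∀ x : Fin s, f (ψ (Sum.inl x)) = X ^ (x:ℕ) := by
    intro x
    rw [hf]; dsimp only; rw [hψl x, if_pos x.isLt]
  have hfr : ∀ p : Fin s', f (ψ (Sum.inr p)) = X ^ (p:ℕ) * P := by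
    intro p
    rw [hf]; dsimp only; rw [hψr p, if_neg (by omega)]
    congr 2
    omega
  -- determinant of B.submatrix ψ id
  set Smat : Matrix (Fin s') (Fin s') F :=
    Matrix.of fun p l : Fin s' => esymZ a ((s : ℤ) - (r l : ℤ) + (p : ℤ)) with hSmat
  have hdetB : (B.submatrix (⇑ψ) id).det
      = (∏ i : Fin s, ∏ j ∈ Finset.Ioi i, (a j - a i)) * Smat.det := by
    have h21 : (B.submatrix (⇑ψ) id).toBlocks₂₁ = 0 := by
      ext p j
      simp only [Matrix.toBlocks₂₁, Matrix.submatrix_apply, Matrix.of_apply, id_eq,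
        Matrix.zero_apply]
      rw [hBl, hfr, eval_mul, hPeval, mul_zero]
    have hsplitdet : (B.submatrix (⇑ψ) id).det
        = ((B.submatrix (⇑ψ) id).toBlocks₁₁).det * ((B.submatrix (⇑ψ) id).toBlocks₂₂).det := by
      conv_lhs => rw [← Matrix.fromBlocks_toBlocks (B.submatrix (⇑ψ) id), h21]
      rw [Matrix.det_fromBlocks_zero₂₁]
    have h11 : (B.submatrix (⇑ψ) id).toBlocks₁₁ = (Matrix.vandermonde a)ᵀ := by
      ext i j
      simp only [Matrix.toBlocks₁₁, Matrix.submatrix_apply, Matrix.of_apply, id_eq,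
        Matrix.transpose_apply, Matrix.vandermonde]
      rw [hBl, hfl, eval_pow, eval_X]
    have h22 : (B.submatrix (⇑ψ) id).toBlocks₂₂
        = Matrix.of (fun p v : Fin s' => (-1:F) ^ ((p:ℕ) + (v:ℕ)) * Smat p v) := by
      ext p v
      simp only [Matrix.toBlocks₂₂, Matrix.submatrix_apply, Matrix.of_apply, id_eq]
      rw [hBr, hfr, hD p v]
      rfl
    have hdet22 : ((B.submatrix (⇑ψ) id).toBlocks₂₂).det = Smat.det := by
      rw [h22]
      have : Matrix.of (fun p v : Fin s' => (-1:F) ^ ((p:ℕ) + (v:ℕ)) * Smat p v)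
          = Matrix.of (fun p v : Fin s' => (-1:F) ^ (v:ℕ) *
              (Matrix.of (fun p' v' : Fin s' => (-1:F) ^ ((p':ℕ)) * Smat p' v') p v)) := by
        ext p v
        simp only [Matrix.of_apply]
        rw [pow_add]
        ring
      rw [this, Matrix.det_mul_row, Matrix.det_mul_column]
      rw [← mul_assoc, ← Finset.prod_mul_distrib]
      have : ∀ p : Fin s', (-1:F) ^ (p:ℕ) * (-1:F) ^ (p:ℕ) = 1 := by
        intro p
        rw [← pow_add, ← two_mul, pow_mul]
        norm_num
      rw [Finset.prod_congr rfl (fun p _ => this p), Finset.prod_const_one, one_mul]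
    rw [hsplitdet, h11, hdet22, Matrix.det_transpose, Matrix.det_vandermonde]
  -- determinant of A.submatrix φ id
  have hdetA : (A.submatrix (⇑φ) id).det
      = (Matrix.of fun i j : Fin s => a j ^ t i).det * ∏ p : Fin s', (-1:F) ^ (s + (p:ℕ) + r p) := by
    have h12 : (A.submatrix (⇑φ) id).toBlocks₁₂ = 0 := by
      ext x v
      simp only [Matrix.toBlocks₁₂, Matrix.submatrix_apply, Matrix.of_apply, id_eq,
        Matrix.zero_apply, hφl, hA, Sum.elim_inr]
      rw [if_neg]
      intro h
      exact htr x v (by simpa [htF, hrF] using congrArg Fin.val h)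
    have hsplitdet : (A.submatrix (⇑φ) id).det
        = ((A.submatrix (⇑φ) id).toBlocks₁₁).det * ((A.submatrix (⇑φ) id).toBlocks₂₂).det := by
      conv_lhs => rw [← Matrix.fromBlocks_toBlocks (A.submatrix (⇑φ) id), h12]
      rw [Matrix.det_fromBlocks_zero₁₂]
    have h11 : (A.submatrix (⇑φ) id).toBlocks₁₁ = Matrix.of fun i j : Fin s => a j ^ t i := by
      ext x j
      simp only [Matrix.toBlocks₁₁, Matrix.submatrix_apply, Matrix.of_apply, id_eq, hφl, hA]
      rfl
    have h22 : (A.submatrix (⇑φ) id).toBlocks₂₂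
        = Matrix.diagonal (fun p : Fin s' => (-1:F) ^ (s + (p:ℕ) + r p)) := by
      ext p v
      simp only [Matrix.toBlocks₂₂, Matrix.submatrix_apply, Matrix.of_apply, id_eq, hφr, hA,
        Sum.elim_inr]
      by_cases h : p = v
      · subst h
        simp [Matrix.diagonal]
      · rw [if_neg, Matrix.diagonal_apply_ne _ h]
        intro hc
        exact h (hr.injective (by simpa [hrF] using congrArg Fin.val hc))
    rw [hsplitdet, h11, h22, Matrix.det_diagonal]
  -- glue: determinant multiplicativity through the two reindexings
  have hmuleq : (L.submatrix (⇑ψ) (⇑φ)) * (A.submatrix (⇑φ) id) = B.submatrix (⇑ψ) id := by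
    rw [hB]; exact Matrix.submatrix_mul_equiv L A (⇑ψ) φ id
  set e' : Equiv.Perm (Fin s ⊕ Fin s') := φ.trans ψ.symm with he'
  have hLsub : (L.submatrix (⇑ψ) (⇑φ)).det = ((Equiv.Perm.sign e' : ℤ) : F) := by
    have heq : L.submatrix (⇑ψ) (⇑φ) = (L.submatrix (⇑ψ) (⇑ψ)).submatrix id (⇑e') := by
      ext x y
      simp [Matrix.submatrix_apply, he']
    rw [heq, Matrix.det_permute', Matrix.det_submatrix_equiv_self, hdetL, mul_one]
  set π : Equiv.Perm (Fin m) := ψ.symm.trans φ with hπdef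
  have hsignπ : Equiv.Perm.sign e' = Equiv.Perm.sign π := by
    have heq : e' = ((ψ.symm.symm.trans π).trans ψ.symm) := by
      ext x
      simp [he', hπdef]
    rw [heq]
    exact Equiv.Perm.sign_symm_trans_trans π ψ.symm
  -- counting: card of inversions
  have hcard1 : ∀ x : Fin s,
      (univ.filter (fun p : Fin s' => r p < t x)).card + (x:ℕ) = t x := by
    intro x
    have hA1 : (Finset.range m).filter (fun k => k < t x) = Finset.range (t x) := by
      ext k
      simp only [Finset.mem_filter, Finset.mem_range]
      exact ⟨fun h => h.2, fun h => ⟨lt_trans h (htm x), h⟩⟩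
    have hsplit : (Finset.range (t x)).card
        = ((Finset.image t univ).filter (fun k => k < t x)).card
          + ((Finset.image r univ).filter (fun k => k < t x)).card := by
      rw [← hA1, ← hunion, Finset.filter_union]
      exact Finset.card_union_of_disjoint
        (Finset.disjoint_filter_filter hdisj)
    rw [Finset.card_range] at hsplit
    have ht' : ((Finset.image t univ).filter (fun k => k < t x)).card = (x:ℕ) := by
      rw [Finset.filter_image, Finset.card_image_of_injective _ ht.injective]
      have h1 : (univ.filter fun y : Fin s => t y < t x) = univ.filter fun y => y < x := by
        ext y
        simp [ht.lt_iff_lt]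
      have h2 : (univ.filter fun y : Fin s => y < x) = Finset.Iio x := by
        ext y
        simp
      rw [h1, h2, Fin.card_Iio]
    have hr' : ((Finset.image r univ).filter (fun k => k < t x)).card
        = (univ.filter (fun p : Fin s' => r p < t x)).card := by
      rw [Finset.filter_image, Finset.card_image_of_injective _ hr.injective]
    omega
  have hsum_tr : (∑ x : Fin s, t x) + (∑ p : Fin s', r p) = ∑ k ∈ Finset.range m, k := by
    rw [← hunion, Finset.sum_union hdisj,
      Finset.sum_image (fun x _ y _ h => ht.injective h),
      Finset.sum_image (fun x _ y _ h => hr.injective h)]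
  have hsum_range : ∑ k ∈ Finset.range m, k
      = (∑ x : Fin s, (x:ℕ)) + ∑ p : Fin s', (s + (p:ℕ)) := by
    rw [hm, Finset.range_add, Finset.sum_union, Finset.sum_map]
    · congr 1
      · rw [← Fin.sum_univ_eq_sum_range (fun i => i) s]
      · simp only [addLeftEmbedding_apply]
        rw [← Fin.sum_univ_eq_sum_range (fun i => s + i) s']
    · rw [Finset.disjoint_left]
      intro k hk hk'
      rw [Finset.mem_range] at hk
      obtain ⟨b, hb, rfl⟩ := Finset.mem_map.mp hk'
      simp only [addLeftEmbedding_apply] at hk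
      omega
  -- evaluating π along ψ
  have hπl : ∀ x : Fin s, π (ψ (Sum.inl x)) = tF x := by
    intro x
    simp only [hπdef, Equiv.trans_apply, Equiv.symm_apply_apply]
    exact hφl x
  have hπr : ∀ p : Fin s', π (ψ (Sum.inr p)) = rF p := by
    intro p
    simp only [hπdef, Equiv.trans_apply, Equiv.symm_apply_apply]
    exact hφr p
  have hIoi : ∀ i : Fin m, Finset.Ioi i = univ.filter (fun j => i < j) := by
    intro i; ext j; simp
  -- the product of inversion signs
  have hprodval : (∏ i : Fin m, ∏ j ∈ Finset.Ioi i, (if π j < π i then (-1:ℚ) else 1))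
      = (-1:ℚ) ^ (∑ x : Fin s, (univ.filter (fun p : Fin s' => r p < t x)).card) := by
    rw [← Equiv.prod_comp ψ (fun i => ∏ j ∈ Finset.Ioi i, (if π j < π i then (-1:ℚ) else 1))]
    rw [Fintype.prod_sum_type]
    have h2 : ∀ p : Fin s', (∏ j ∈ Finset.Ioi (ψ (Sum.inr p)),
        (if π j < π (ψ (Sum.inr p)) then (-1:ℚ) else 1)) = 1 := by
      intro p
      refine Finset.prod_eq_one ?_
      intro j hj
      rw [Finset.mem_Ioi] at hj
      obtain ⟨y, rfl⟩ := ψ.surjective j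
      match y with
      | Sum.inl x =>
          exfalso
          have e1 : (ψ (Sum.inl x) : ℕ) = (x:ℕ) := hψl x
          have e2 : (ψ (Sum.inr p) : ℕ) = s + (p:ℕ) := hψr p
          have e3 := Fin.lt_def.mp hj
          have := x.isLt
          omega
      | Sum.inr q =>
          rw [if_neg]
          rw [hπr, hπr, not_lt]
          have hpq : (p:ℕ) < (q:ℕ) := by
            have e3 := Fin.lt_def.mp hj
            have e1 := hψr q
            have e2 := hψr p
            omega
          have : r p < r q := hr (show p < q from hpq)
          exact le_of_lt (by rw [Fin.lt_def]; exact this)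
    rw [Finset.prod_congr rfl (fun p _ => h2 p), Finset.prod_const_one, mul_one]
    have h1 : ∀ x : Fin s, (∏ j ∈ Finset.Ioi (ψ (Sum.inl x)),
        (if π j < π (ψ (Sum.inl x)) then (-1:ℚ) else 1))
        = (-1:ℚ) ^ (univ.filter (fun p : Fin s' => r p < t x)).card := by
      intro x
      rw [hIoi, Finset.prod_filter,
        ← Equiv.prod_comp ψ (fun j => if ψ (Sum.inl x) < j then
          (if π j < π (ψ (Sum.inl x)) then (-1:ℚ) else 1) else 1),
        Fintype.prod_sum_type]
      have hl1 : ∀ y : Fin s, (if ψ (Sum.inl x) < ψ (Sum.inl y) then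
          (if π (ψ (Sum.inl y)) < π (ψ (Sum.inl x)) then (-1:ℚ) else 1) else 1) = 1 := by
        intro y
        by_cases hxy : ψ (Sum.inl x) < ψ (Sum.inl y)
        · rw [if_pos hxy, if_neg]
          rw [hπl, hπl, not_lt, Fin.le_def]
          have hxy' : (x:ℕ) < (y:ℕ) := by
            have e3 := Fin.lt_def.mp hxy
            have e1 := hψl x
            have e2 := hψl y
            omega
          exact le_of_lt (ht (show x < y from hxy'))
        · rw [if_neg hxy]
      rw [Finset.prod_congr rfl (fun y _ => hl1 y), Finset.prod_const_one, one_mul]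
      have hl2 : ∀ q : Fin s', (if ψ (Sum.inl x) < ψ (Sum.inr q) then
          (if π (ψ (Sum.inr q)) < π (ψ (Sum.inl x)) then (-1:ℚ) else 1) else 1)
          = (if r q < t x then (-1:ℚ) else 1) := by
        intro q
        rw [if_pos, hπr, hπl]
        · exact if_congr (by simp [Fin.lt_def, htF, hrF]) rfl rfl
        · rw [Fin.lt_def]
          have e1 := hψl x
          have e2 := hψr q
          have := x.isLt
          omega
      rw [Finset.prod_congr rfl (fun q _ => hl2 q)]
      rw [Finset.prod_ite, Finset.prod_const, Finset.prod_const_one, mul_one]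
    rw [Finset.prod_congr rfl (fun x _ => h1 x), Finset.prod_pow_eq_pow_sum]
  -- the sign of π
  have hsignQ := sign_inversions π
  rw [hprodval] at hsignQ
  set Sn := ∑ p : Fin s', (s + (p:ℕ) + r p) with hSn
  have hparity : (-1:ℚ) ^ (∑ x : Fin s, (univ.filter (fun p : Fin s' => r p < t x)).card)
      = (-1:ℚ) ^ Sn := by
    rw [neg_one_pow_eq_pow_mod_two, neg_one_pow_eq_pow_mod_two (n := Sn)]
    congr 1
    have h1 : (∑ x : Fin s, (univ.filter (fun p : Fin s' => r p < t x)).card)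
        + (∑ x : Fin s, (x:ℕ)) = ∑ x : Fin s, t x := by
      rw [← Finset.sum_add_distrib]
      exact Finset.sum_congr rfl (fun x _ => hcard1 x)
    have h2 : Sn = (∑ p : Fin s', (s + (p:ℕ))) + ∑ p : Fin s', r p := by
      rw [hSn, ← Finset.sum_add_distrib]
    omega
  rw [hparity] at hsignQ
  have hsignF : ((Equiv.Perm.sign π : ℤ) : F) = (-1:F) ^ Sn := by
    have hint : (Equiv.Perm.sign π : ℤ) = (-1:ℤ) ^ Sn := by exact_mod_cast hsignQ
    rw [hint]
    push_cast
    ring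
  -- assembly
  have hfinal := hdetB
  rw [← hmuleq, Matrix.det_mul, hLsub, hsignπ, hdetA, hsignF,
    Finset.prod_pow_eq_pow_sum] at hfinal
  have hunit : (-1:F) ^ Sn * (-1:F) ^ Sn = 1 := by
    rw [← pow_add, ← two_mul, pow_mul]
    norm_num
  calc (Matrix.of fun i j : Fin s => a j ^ t i).det
      = (-1:F) ^ Sn * ((Matrix.of fun i j : Fin s => a j ^ t i).det * (-1:F) ^ Sn) := by
        rw [mul_comm ((Matrix.of fun i j : Fin s => a j ^ t i).det) ((-1:F) ^ Sn), ← mul_assoc,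
          hunit, one_mul]
    _ = (∏ i : Fin s, ∏ j ∈ Finset.Ioi i, (a j - a i)) * Smat.det := hfinal
end

section
/- Let C be an [n,k]_q linear code such that any k-1 columns of a generator matrix G are linearly independent (which holds if C is MDS or NMDS), let u ∈ F_q^n be such that the code C_u generated by G and u is an [n, k+1, n-k] MDS code, and let C' be the code in F_q^{n+1} generated by the rows of G augmented with a 0, together with (u, 1). Then the minimum Hamming weight of a nonzero codeword of the dual code (C')^⊥ is at least k+1. -/
open Finset Polynomial

section AuxLemmas2
variable {F : Type*} [Field F] [DecidableEq F]

lemma hammingNorm_eq_card {n : ℕ} (x : Fin n → F) :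
    hammingNorm x = (Finset.univ.filter fun i => x i ≠ 0).card := rfl

/-- If a vector of weight ≤ k+1 is orthogonal to a code of dimension k+1 all of
whose nonzero words have weight ≥ n-k, then it is zero. -/
lemma lemA {n k : ℕ} (hkn : k + 1 ≤ n) (D : Submodule F (Fin n → F))
    (hDdim : Module.finrank F D = k + 1)
    (hwt : ∀ c ∈ D, c ≠ 0 → n - k ≤ hammingNorm c)
    (x : Fin n → F) (hx : ∀ c ∈ D, ∑ i, x i * c i = 0)
    (hwx : hammingNorm x ≤ k + 1) : x = 0 := by
  classical
  set S : Finset (Fin n) := Finset.univ.filter fun i => x i ≠ 0 with hS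
  have hSsub : ∀ i, i ∉ S → x i = 0 := by
    intro i hi; by_contra h; exact hi (Finset.mem_filter.mpr ⟨Finset.mem_univ _, h⟩)
  obtain ⟨T, hST, -, hTcard⟩ :=
    Finset.exists_subsuperset_card_eq (S.subset_univ) hwx (by simpa using hkn)
  let r : D →ₗ[F] ({ i // i ∈ T } → F) :=
    { toFun := fun c j => (c : Fin n → F) j.1
      map_add' := fun a b => rfl
      map_smul' := fun t a => rfl }
  have hinj : Function.Injective r := by
    rw [← LinearMap.ker_eq_bot]
    ext c
    simp only [LinearMap.mem_ker, Submodule.mem_bot]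
    constructor
    · intro hc
      by_contra hc0
      have hcz : ∀ j ∈ T, (c : Fin n → F) j = 0 := by
        intro j hj
        exact congrFun hc ⟨j, hj⟩
      have hsub : (Finset.univ.filter fun i => (c : Fin n → F) i ≠ 0) ⊆ Tᶜ := by
        intro i hi
        rw [Finset.mem_compl]
        intro hiT
        exact (Finset.mem_filter.mp hi).2 (hcz i hiT)
      have h1 : hammingNorm (c : Fin n → F) ≤ n - (k + 1) := by
        calc hammingNorm (c : Fin n → F) ≤ Tᶜ.card := Finset.card_le_card hsub
          _ = n - (k + 1) := by rw [Finset.card_compl, hTcard]; simp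
      have hcne : (c : Fin n → F) ≠ 0 := fun h => hc0 (Subtype.ext h)
      have h2 := hwt (c : Fin n → F) c.2 hcne
      omega
    · intro hc; rw [hc]; rfl
  have hcards : Module.finrank F D = Module.finrank F ({ i // i ∈ T } → F) := by
    rw [hDdim, Module.finrank_fintype_fun_eq_card, Fintype.card_coe, hTcard]
  have hsurj : Function.Surjective r :=
    (LinearMap.injective_iff_surjective_of_finrank_eq_finrank hcards).mp hinj
  funext i
  show x i = 0
  by_cases hiT : i ∈ T
  · obtain ⟨c, hc⟩ := hsurj (Pi.single ⟨i, hiT⟩ 1)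
    have h0 := hx (c : Fin n → F) c.2
    have hsum : ∑ j, x j * (c : Fin n → F) j = x i := by
      rw [← Finset.sum_subset T.subset_univ
        (fun j _ hj => by rw [hSsub j (fun hjS => hj (hST hjS)), zero_mul])]
      rw [← Finset.sum_coe_sort T (fun j => x j * (c : Fin n → F) j)]
      calc ∑ j : { a // a ∈ T }, x j.1 * (c : Fin n → F) j.1
          = ∑ j : { a // a ∈ T }, x j.1 * r c j := rfl
        _ = x i := by
            rw [hc]
            simp [Pi.single_apply, mul_ite]
    rw [hsum] at h0
    exact h0
  · exact hSsub i (fun hiS => hiT (hST hiS))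

/-- If a vector of weight ≤ k-1 is orthogonal to all rows of G, and any k-1 columns
of G are linearly independent, then it is zero. -/
lemma lemB {n k : ℕ} (hkn : k - 1 ≤ n) (G : Matrix (Fin k) (Fin n) F)
    (hcol : ∀ s : Finset (Fin n), s.card = k - 1 →
      LinearIndependent F (fun j : {x // x ∈ s} => fun i : Fin k => G i j.1))
    (x : Fin n → F) (hx : ∀ i : Fin k, ∑ j, x j * G i j = 0)
    (hwx : hammingNorm x ≤ k - 1) : x = 0 := by
  classical
  set S : Finset (Fin n) := Finset.univ.filter fun i => x i ≠ 0 with hS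
  have hSsub : ∀ i, i ∉ S → x i = 0 := by
    intro i hi; by_contra h; exact hi (Finset.mem_filter.mpr ⟨Finset.mem_univ _, h⟩)
  obtain ⟨T, hST, -, hTcard⟩ :=
    Finset.exists_subsuperset_card_eq (S.subset_univ) hwx (by simpa using hkn)
  have hli := hcol T hTcard
  rw [Fintype.linearIndependent_iff] at hli
  have hz : ∀ j : { a // a ∈ T }, x j.1 = 0 := by
    apply hli
    funext i
    simp only [Finset.sum_apply, Pi.smul_apply, smul_eq_mul, Pi.zero_apply]
    rw [Finset.sum_coe_sort T (fun j => x j * G i j)]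
    rw [Finset.sum_subset T.subset_univ
      (fun j _ hj => by rw [hSsub j (fun hjS => hj (hST hjS)), zero_mul])]
    exact hx i
  funext i
  show x i = 0
  by_cases hiT : i ∈ T
  · exact hz ⟨i, hiT⟩
  · exact hSsub i (fun hiS => hiT (hST hiS))

end AuxLemmas2

theorem stmt_19 {F : Type*} [Field F] [Fintype F] [DecidableEq F] {n k : ℕ}
    (hk0 : 0 < k) (hk : k ≤ n)
    (C : Submodule F (Fin n → F)) (G : Matrix (Fin k) (Fin n) F)
    (hG : C = Submodule.span F (Set.range fun i : Fin k => (G i : Fin n → F)))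
    (hdim : Module.finrank F C = k)
    (hcol : ∀ s : Finset (Fin n), s.card = k - 1 →
      LinearIndependent F (fun j : {x // x ∈ s} => fun i : Fin k => G i j.1))
    (u : Fin n → F)
    (hCudim : Module.finrank F ↥(C ⊔ Submodule.span F {u}) = k + 1)
    (hCud : minWt (C ⊔ Submodule.span F {u}) = n - k) :
    k + 1 ≤ minWt (dualCode (extCode C u)) := by
  classical
  set Cu := C ⊔ Submodule.span F {u} with hCuDef
  -- Cu is nontrivial
  have hne : ∃ c : Fin n → F, c ∈ Cu ∧ c ≠ 0 := by
    by_contra h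
    push_neg at h
    have hbot : Cu = ⊥ := by
      rw [Submodule.eq_bot_iff]
      intro c hc
      by_contra h0
      exact h0 (h c hc)
    rw [hbot] at hCudim
    simp [finrank_bot] at hCudim
  -- 1 ≤ n - k
  have h1nk : 1 ≤ n - k := by
    have hmemWt : minWt Cu ∈ {w | ∃ c ∈ Cu, c ≠ 0 ∧ hammingNorm c = w} := by
      apply Nat.sInf_mem
      obtain ⟨c, hc, hc0⟩ := hne
      exact ⟨hammingNorm c, c, hc, hc0, rfl⟩
    obtain ⟨c, hc, hc0, hcw⟩ := hmemWt
    rw [hCud] at hcw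
    have hcn : hammingNorm c ≠ 0 := fun h => hc0 (hammingNorm_eq_zero.mp h)
    omega
  have hkn : k + 1 ≤ n := by omega
  have hwtCu : ∀ c ∈ Cu, c ≠ 0 → n - k ≤ hammingNorm c := by
    intro c hc hc0
    rw [← hCud]
    exact Nat.sInf_le ⟨c, hc, hc0, rfl⟩
  -- extCode is a proper subspace
  have hprod : (C.prod (⊤ : Submodule F F))
      = LinearMap.range (C.subtype.prodMap (LinearMap.id (R := F) (M := F))) := by
    ext p
    simp only [Submodule.mem_prod, Submodule.mem_top, and_true, LinearMap.mem_range]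
    constructor
    · intro hp1
      exact ⟨(⟨p.1, hp1⟩, p.2), rfl⟩
    · rintro ⟨q, rfl⟩
      exact q.1.2
  have hrange : extCode C u
      = LinearMap.range ((extMap u).comp (C.subtype.prodMap (LinearMap.id (R := F) (M := F)))) := by
    rw [LinearMap.range_comp, ← hprod]
    rfl
  have hfr : Module.finrank F (extCode C u) ≤ k + 1 := by
    rw [hrange]
    calc Module.finrank F (LinearMap.range ((extMap u).comp
          (C.subtype.prodMap (LinearMap.id (R := F) (M := F)))))
        ≤ Module.finrank F (↥C × F) := LinearMap.finrank_range_le _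
      _ = k + 1 := by rw [Module.finrank_prod, hdim, Module.finrank_self]
  have hClt : extCode C u ≠ ⊤ := by
    intro h
    rw [h, finrank_top, Module.finrank_fintype_fun_eq_card, Fintype.card_fin] at hfr
    omega
  -- membership in the dual code via explicit generators
  apply le_csInf
  · -- nonemptiness: there is a nonzero dual codeword
    obtain ⟨f, hf0, hfbot⟩ :=
      Submodule.exists_dual_map_eq_bot_of_lt_top (lt_top_iff_ne_top.mpr hClt) inferInstance
    set x : Fin (n + 1) → F := fun j => f (Pi.single j 1) with hxdef
    have hfx : ∀ y : Fin (n + 1) → F, f y = ∑ j, y j * x j := by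
      intro y
      have hy : (∑ j, y j • (Pi.single j (1 : F) : Fin (n + 1) → F)) = y := by
        funext i
        simp [Finset.sum_apply, Pi.single_apply, mul_ite, Finset.sum_ite_eq]
      calc f y = f (∑ j, y j • (Pi.single j (1 : F) : Fin (n + 1) → F)) := by rw [hy]
        _ = ∑ j, y j * x j := by
            rw [map_sum]
            exact Finset.sum_congr rfl fun j _ => by rw [map_smul, smul_eq_mul]
    have hx0 : x ≠ 0 := by
      intro h
      apply hf0
      apply LinearMap.ext
      intro y
      rw [hfx y, h]
      simp
    have hxmem : x ∈ dualCode (extCode C u) := by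
      intro c hc
      have hfc : f c = 0 := by
        have : f c ∈ Submodule.map f (extCode C u) := Submodule.mem_map_of_mem hc
        rw [hfbot] at this
        exact (Submodule.mem_bot F).mp this
      rw [hfx c] at hfc
      rw [← hfc]
      exact Finset.sum_congr rfl fun i _ => mul_comm _ _
    exact ⟨hammingNorm x, x, hxmem, hx0, rfl⟩
  · rintro w ⟨x, hx, hx0, rfl⟩
    by_contra hlt
    push_neg at hlt
    have hwx : hammingNorm x ≤ k := by omega
    set x' : Fin n → F := fun j => x j.castSucc with hx'def
    set a : F := x (Fin.last n) with hadef
    have hxd : ∀ c ∈ extCode C u, ∑ i, x i * c i = 0 := hx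
    have horth : ∀ c ∈ C, ∀ b : F,
        (∑ j : Fin n, x' j * (c j + b * u j)) + a * b = 0 := by
      intro c hc b
      have hmem : Fin.snoc (c + b • u) b ∈ extCode C u :=
        ⟨(c, b), ⟨hc, Submodule.mem_top⟩, rfl⟩
      have h0 := hxd _ hmem
      rw [Fin.sum_univ_castSucc] at h0
      simpa [Fin.snoc_castSucc, Fin.snoc_last, Pi.add_apply, Pi.smul_apply,
        smul_eq_mul] using h0
    have horthC : ∀ c ∈ C, ∑ j, x' j * c j = 0 := by
      intro c hc
      have h0 := horth c hc 0
      simpa using h0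
    have horthu : ∑ j, x' j * u j = -a := by
      have h0 := horth 0 C.zero_mem 1
      simp only [Pi.zero_apply, zero_add, mul_one, one_mul] at h0
      exact eq_neg_of_add_eq_zero_left h0
    have hnormsplit : hammingNorm x = hammingNorm x' + (if a ≠ 0 then 1 else 0) := by
      rw [hammingNorm_eq_card, hammingNorm_eq_card, Finset.card_filter,
        Finset.card_filter, Fin.sum_univ_castSucc]
    by_cases ha0 : a = 0
    · have hx'0 : x' = 0 := by
        apply lemA hkn Cu hCudim hwtCu x' _ (by omega)
        intro c hc
        obtain ⟨y, hy, z, hz, rfl⟩ := Submodule.mem_sup.mp hc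
        obtain ⟨t, rfl⟩ := Submodule.mem_span_singleton.mp hz
        have h1 := horthC y hy
        have hexp : ∑ j, x' j * (y + t • u) j
            = (∑ j, x' j * y j) + t * ∑ j, x' j * u j := by
          rw [Finset.mul_sum, ← Finset.sum_add_distrib]
          refine Finset.sum_congr rfl fun j _ => ?_
          simp only [Pi.add_apply, Pi.smul_apply, smul_eq_mul]
          ring
        rw [hexp, h1, horthu, ha0]
        ring
      apply absurd _ hx0
      funext i
      refine Fin.lastCases ?_ (fun j => ?_) i
      · exact ha0
      · exact congrFun hx'0 j
    · have hwx' : hammingNorm x' ≤ k - 1 := by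
        rw [if_pos ha0] at hnormsplit
        omega
      have hx'0 : x' = 0 := by
        apply lemB (by omega) G hcol x' _ hwx'
        intro i
        exact horthC (G i) (hG ▸ Submodule.subset_span ⟨i, rfl⟩)
      rw [hx'0] at horthu
      simp at horthu
      exact ha0 horthu
end
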